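/- arXiv:0804.2885 — 9 statements merged into one kernel-verified Lean document; each statement's English description precedes it below -/
import Mathlib

section
/- Let S be a Polish space and let G ⊂ C_b(S) be a uniformly bounded and equicontinuous family of bounded continuous real-valued functions on S. Then there exists a countable subfamily {g_n : n ∈ ℕ} ⊂ G such that for all Borel probability measures μ, ν on S, ‖μ − ν‖_G = sup_n |∫ g_n dμ − ∫ g_n dν|. -/
open MeasureTheory Set TopologicalSpace Filter Topology

private lemma real_biSup_le {α : Type*} {F : α → ℝ} {s : Set α} {a : ℝ}
    (ha : 0 ≤ a) (h : ∀ g ∈ s, F g ≤ a) : (⨆ g ∈ s, F g) ≤ a :=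
  Real.iSup_le (fun g => Real.iSup_le (fun hg => h g hg) ha) ha

private lemma real_biSup_nonneg {α : Type*} {F : α → ℝ} {s : Set α}
    (h : ∀ g ∈ s, 0 ≤ F g) : 0 ≤ ⨆ g ∈ s, F g :=
  Real.iSup_nonneg fun g => Real.iSup_nonneg fun hg => h g hg

private lemma le_real_biSup {α : Type*} {F : α → ℝ} {s : Set α} {B : ℝ}
    (hB : ∀ g ∈ s, F g ≤ B) {g : α} (hg : g ∈ s) : F g ≤ ⨆ g ∈ s, F g := by
  have hbdd : BddAbove (Set.range fun g => ⨆ _ : g ∈ s, F g) := by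
    refine ⟨max B 0, ?_⟩
    rintro _ ⟨g, rfl⟩
    exact Real.iSup_le (fun hg => (hB g hg).trans (le_max_left _ _)) (le_max_right _ _)
  have h1 : F g = ⨆ _ : g ∈ s, F g := by
    haveI : Nonempty (g ∈ s) := ⟨hg⟩
    exact ciSup_const.symm
  rw [h1]
  exact le_ciSup hbdd g


/-- Let `S` be a Polish space and `G` a uniformly bounded and
equicontinuous family of (bounded) continuous functions on `S`. Then there is a
countable subfamily `G' ⊆ G` such that for all Borel probability measures `μ, ν`,
`‖μ - ν‖_G = ‖μ - ν‖_{G'}`. -/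
theorem stmt0 (S : Type*) [MetricSpace S] [CompleteSpace S]
    [TopologicalSpace.SeparableSpace S] [MeasurableSpace S] [BorelSpace S]
    (G : Set (S → ℝ)) (hGcont : ∀ g ∈ G, Continuous g)
    (M : ℝ) (hGbdd : ∀ g ∈ G, ∀ x, |g x| ≤ M)
    (hGequi : Equicontinuous (fun g : G => (g : S → ℝ))) :
    ∃ G' ⊆ G, G'.Countable ∧
      ∀ (μ ν : Measure S), IsProbabilityMeasure μ → IsProbabilityMeasure ν →
        (⨆ g ∈ G, |∫ x, g x ∂μ - ∫ x, g x ∂ν|)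
          = ⨆ g ∈ G', |∫ x, g x ∂μ - ∫ x, g x ∂ν| := by
  rcases G.eq_empty_or_nonempty with hGe | hGne
  · subst hGe
    exact ⟨∅, Set.Subset.rfl, countable_empty, fun μ ν _ _ => rfl⟩
  obtain ⟨D, hDc, hDd⟩ := TopologicalSpace.exists_countable_dense S
  haveI : Countable D := hDc.to_subtype
  set Φ : G → (D → ℝ) := fun g d => (g : S → ℝ) d with hΦdef
  letI : PseudoMetricSpace (D → ℝ) := TopologicalSpace.pseudoMetrizableSpacePseudoMetric _
  have hsep : IsSeparable (Set.range Φ) := by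
    have h1 : IsSeparable (univ : Set (D → ℝ)) := by
      have h2 : IsSeparable (univ.pi fun _ : D => (univ : Set ℝ)) :=
        IsSeparable.univ_pi fun _ => (isSeparable_univ_iff.mpr inferInstance)
      rwa [Set.pi_univ] at h2
    exact h1.mono (subset_univ _)
  obtain ⟨T, hTsub, hTc, hTd⟩ := hsep.exists_countable_dense_subset
  haveI : Countable T := hTc.to_subtype
  choose sel hsel using fun t : T => (hTsub t.2 : (t : D → ℝ) ∈ Set.range Φ)
  refine ⟨Set.range fun t : T => ((sel t : G) : S → ℝ), ?_, countable_range _, ?_⟩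
  · rintro _ ⟨t, rfl⟩
    exact (sel t).2
  intro μ ν hμ hν
  haveI := hμ; haveI := hν
  set G' : Set (S → ℝ) := Set.range fun t : T => ((sel t : G) : S → ℝ) with hG'def
  have hG'sub : G' ⊆ G := by rintro _ ⟨t, rfl⟩; exact (sel t).2
  set F : (S → ℝ) → ℝ := fun g => |∫ x, g x ∂μ - ∫ x, g x ∂ν| with hFdef
  have hSne : Nonempty S := by
    by_contra h
    rw [not_nonempty_iff] at h
    have h1 := hμ.measure_univ
    rw [Set.univ_eq_empty_iff.mpr h, measure_empty] at h1
    exact zero_ne_one h1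
  -- integral bound
  have hIbd : ∀ g ∈ G, ∀ (κ : Measure S), IsProbabilityMeasure κ → |∫ x, g x ∂κ| ≤ M := by
    intro g hg κ hκ
    haveI := hκ
    have := norm_integral_le_of_norm_le_const (μ := κ) (f := fun x => g x) (C := M)
      (Filter.Eventually.of_forall fun x => by simpa using hGbdd g hg x)
    simpa [hκ.measure_univ] using this
  have hFbd : ∀ g ∈ G, F g ≤ 2 * M := by
    intro g hg
    calc F g ≤ |∫ x, g x ∂μ| + |∫ x, g x ∂ν| := abs_sub _ _
      _ ≤ M + M := add_le_add (hIbd g hg μ hμ) (hIbd g hg ν hν)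
      _ = 2 * M := (two_mul M).symm
  -- key: every F g, g ∈ G, is at most the sup over G'
  have hkey : ∀ g ∈ G, F g ≤ ⨆ g ∈ G', F g := by
    intro g hg
    have hmem : Φ ⟨g, hg⟩ ∈ closure T := hTd ⟨⟨g, hg⟩, rfl⟩
    rw [mem_closure_iff_seq_limit] at hmem
    obtain ⟨u, huT, hulim⟩ := hmem
    set v : ℕ → G := fun n => sel ⟨u n, huT n⟩ with hvdef
    have hΦv : ∀ n, Φ (v n) = u n := fun n => hsel ⟨u n, huT n⟩
    have hvG' : ∀ n, ((v n : G) : S → ℝ) ∈ G' := fun n => ⟨⟨u n, huT n⟩, rfl⟩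
    -- pointwise convergence on D
    have hD : ∀ d : D, Tendsto (fun n => ((v n : G) : S → ℝ) d) atTop (𝓝 (g (d : S))) := by
      intro d
      have h0 := (tendsto_pi_nhds.mp hulim) d
      exact h0.congr fun n => (congrFun (hΦv n) d).symm
    -- pointwise convergence everywhere
    have hall : ∀ x : S, Tendsto (fun n => ((v n : G) : S → ℝ) x) atTop (𝓝 (g x)) := by
      intro x
      rw [Metric.tendsto_atTop]
      intro ε hε
      obtain ⟨δ, hδ, hδε⟩ := (Metric.equicontinuousAt_iff.mp (hGequi x)) (ε / 3) (by linarith)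
      obtain ⟨y, hy⟩ := Metric.dense_iff.mp hDd x δ hδ
      obtain ⟨hyball, hyD⟩ := hy
      have hyd : dist y x < δ := by simpa [Metric.mem_ball] using hyball
      obtain ⟨N, hN⟩ := Metric.tendsto_atTop.mp (hD ⟨y, hyD⟩) (ε / 3) (by linarith)
      refine ⟨N, fun n hn => ?_⟩
      have h1 : dist (((v n : G) : S → ℝ) x) (((v n : G) : S → ℝ) y) < ε / 3 := by
        have := hδε y hyd (v n)
        simpa [dist_comm] using this
      have h2 : dist (((v n : G) : S → ℝ) y) (g y) < ε / 3 := hN n hn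
      have h3 : dist (g y) (g x) < ε / 3 := by
        have := hδε y hyd ⟨g, hg⟩
        simpa [dist_comm] using this
      calc dist (((v n : G) : S → ℝ) x) (g x)
          ≤ dist (((v n : G) : S → ℝ) x) (((v n : G) : S → ℝ) y)
            + dist (((v n : G) : S → ℝ) y) (g y) + dist (g y) (g x) := dist_triangle4 _ _ _ _
        _ < ε / 3 + ε / 3 + ε / 3 := by linarith
        _ = ε := by ring
    -- dominated convergence
    have hconv : ∀ (κ : Measure S), IsProbabilityMeasure κ →
        Tendsto (fun n => ∫ x, ((v n : G) : S → ℝ) x ∂κ) atTop (𝓝 (∫ x, g x ∂κ)) := by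
      intro κ hκ
      haveI := hκ
      refine tendsto_integral_of_dominated_convergence (fun _ => M)
        (fun n => (hGcont _ (v n).2).aestronglyMeasurable)
        (integrable_const M)
        (fun n => Filter.Eventually.of_forall fun x => by
          simpa using hGbdd _ (v n).2 x)
        (Filter.Eventually.of_forall hall)
    have hFtend : Tendsto (fun n => F ((v n : G) : S → ℝ)) atTop (𝓝 (F g)) :=
      ((hconv μ hμ).sub (hconv ν hν)).abs
    refine le_of_tendsto hFtend (Filter.Eventually.of_forall fun n => ?_)
    exact le_real_biSup (fun h hh => hFbd h (hG'sub hh)) (hvG' n)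
  have hFnn : ∀ (g : S → ℝ), 0 ≤ F g := fun g => abs_nonneg _
  refine le_antisymm ?_ ?_
  · exact real_biSup_le (real_biSup_nonneg fun g _ => hFnn g) hkey
  · exact real_biSup_le (real_biSup_nonneg fun g _ => hFnn g)
      (fun g hg => le_real_biSup hFbd (hG'sub hg))
end

section
/- Let (Ω, 𝓕) be a measurable space, S a Polish space, and let μ : Ω × 𝓑(S) → [0,1] and ν : Ω × 𝓑(S) → [0,1] be probability kernels (i.e., Markov kernels from Ω to S). Let G ⊂ C_b(S) be uniformly bounded and equicontinuous. Then the map ω ↦ ‖μ(ω,·) − ν(ω,·)‖_G is measurable. -/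
/-!
An equicontinuous family is determined, topologically, by its values on a countable dense subset
of `S`: pointwise convergence on that subset already forces pointwise convergence everywhere.
Hence `G`, with the topology of pointwise convergence, embeds into a countable product of copies
of `ℝ` and is second countable. By dominated convergence `g ↦ |∫ g dκ(ω) - ∫ g dη(ω)|` is
continuous on `G`, so its supremum over `G` is a supremum over a countable dense subfamily, and a
countable supremum of measurable functions is measurable.
-/

open MeasureTheory Filter Topology Set

section Equicontinuous

variable {ι X α : Type*} [TopologicalSpace ι] [TopologicalSpace X] [UniformSpace α]
  {F : ι → X → α}

theorem Equicontinuous.isInducing_restrict_of_dense (hF : Equicontinuous F) (hFi : IsInducing F)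
    {D : Set X} (hD : Dense D) : IsInducing fun i (d : D) ↦ F i d := by
  refine isInducing_iff_nhds.2 fun i ↦ le_antisymm ?_ ?_
  · exact (continuous_pi fun d : D ↦ (continuous_apply (d : X)).comp hFi.continuous).tendsto i
      |>.le_comap
  · rw [hFi.nhds_eq_comap i, ← tendsto_iff_comap, tendsto_pi_nhds]
    set l := comap (fun i (d : D) ↦ F i d) (𝓝 fun d : D ↦ F i d)
    have hD_sub : D ⊆ {x | Tendsto (F · x) l (𝓝 (F i x))} := fun d hd ↦
      tendsto_pi_nhds.1 (tendsto_comap : Tendsto (fun i (d : D) ↦ F i d) l _) ⟨d, hd⟩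
    have hclosed := hF.isClosed_setOfPred_tendsto (l := l) (hF.continuous i)
    intro x
    exact hclosed.closure_subset_iff.2 hD_sub (hD x)

theorem Equicontinuous.secondCountableTopology [TopologicalSpace.SeparableSpace X]
    [SecondCountableTopology α] (hF : Equicontinuous F) (hFi : IsInducing F) :
    SecondCountableTopology ι := by
  obtain ⟨D, hD_count, hD_dense⟩ := TopologicalSpace.exists_countable_dense X
  have := hD_count.to_subtype
  exact (hF.isInducing_restrict_of_dense hFi hD_dense).secondCountableTopology

end Equicontinuous

theorem abs_integral_le_of_forall_abs_le {S : Type*} [MeasurableSpace S] {μ : Measure S}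
    [IsProbabilityMeasure μ] {f : S → ℝ} {M : ℝ} (hf : ∀ x, |f x| ≤ M) : |∫ x, f x ∂μ| ≤ M := by
  simpa using norm_integral_le_of_norm_le_const (μ := μ)
    (ae_of_all _ fun x ↦ (Real.norm_eq_abs (f x)).trans_le (hf x))

theorem stmt1_general (Ω : Type*) [MeasurableSpace Ω]
    (S : Type*) [MetricSpace S]
    [TopologicalSpace.SeparableSpace S] [MeasurableSpace S] [BorelSpace S]
    (κ η : ProbabilityTheory.Kernel Ω S)
    [ProbabilityTheory.IsMarkovKernel κ] [ProbabilityTheory.IsMarkovKernel η]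
    (G : Set (S → ℝ))
    (M : ℝ) (hGbdd : ∀ g ∈ G, ∀ x, |g x| ≤ M)
    (hGequi : Equicontinuous (fun g : G => (g : S → ℝ))) :
    Measurable (fun ω => ⨆ g ∈ G, |∫ x, g x ∂(κ ω) - ∫ x, g x ∂(η ω)|) := by
  set F : (S → ℝ) → Ω → ℝ := fun g ω ↦ |∫ x, g x ∂(κ ω) - ∫ x, g x ∂(η ω)|
  have : SecondCountableTopology G := hGequi.secondCountableTopology IsInducing.subtypeVal
  obtain ⟨T, hT_count, hT_dense⟩ := TopologicalSpace.exists_countable_dense G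
  have := hT_count.to_subtype
  have hcont_integral (μ : Measure S) [IsFiniteMeasure μ] :
      Continuous fun g : G ↦ ∫ x, (g : S → ℝ) x ∂μ :=
    continuous_of_dominated (fun g ↦ (hGequi.continuous g).aestronglyMeasurable)
      (fun g ↦ ae_of_all _ (hGbdd g g.2)) (integrable_const M)
      (ae_of_all _ fun x ↦ (continuous_apply x).comp continuous_subtype_val)
  have hsup_eq (ω : Ω) : ⨆ g ∈ G, F g ω = ⨆ t : T, F t ω := by
    have hbdd : BddAbove (range fun g : G ↦ F g ω) := ⟨M + M, by
      rintro _ ⟨g, rfl⟩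
      exact (abs_sub _ _).trans (add_le_add (abs_integral_le_of_forall_abs_le (hGbdd g g.2))
        (abs_integral_le_of_forall_abs_le (hGbdd g g.2)))⟩
    rw [← ciSup_subtype_fun hbdd (Real.sSup_empty ▸ Real.iSup_nonneg fun _ ↦ abs_nonneg _)]
    exact (hT_dense.ciSup' (f := fun g : G ↦ F g ω)
      ((hcont_integral _).sub (hcont_integral _)).abs).symm
  change Measurable fun ω ↦ ⨆ g ∈ G, F g ω
  rw [funext hsup_eq]
  refine Measurable.iSup fun t ↦ ?_
  have hmeas (ν : ProbabilityTheory.Kernel Ω S) :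
      Measurable fun ω ↦ ∫ x, (t : S → ℝ) x ∂(ν ω) :=
    (hGequi.continuous t).stronglyMeasurable.integral_kernel.measurable
  exact ((hmeas κ).sub (hmeas η)).abs

/-- For Markov kernels `κ, η` from a measurable space `Ω` to a Polish
space `S` and a uniformly bounded equicontinuous family `G ⊆ C_b(S)`, the map
`ω ↦ ‖κ(ω,·) - η(ω,·)‖_G` is measurable. -/
theorem stmt1 (Ω : Type*) [MeasurableSpace Ω]
    (S : Type*) [MetricSpace S] [CompleteSpace S]
    [TopologicalSpace.SeparableSpace S] [MeasurableSpace S] [BorelSpace S]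
    (κ η : ProbabilityTheory.Kernel Ω S)
    [ProbabilityTheory.IsMarkovKernel κ] [ProbabilityTheory.IsMarkovKernel η]
    (G : Set (S → ℝ)) (hGcont : ∀ g ∈ G, Continuous g)
    (M : ℝ) (hGbdd : ∀ g ∈ G, ∀ x, |g x| ≤ M)
    (hGequi : Equicontinuous (fun g : G => (g : S → ℝ))) :
    Measurable (fun ω => ⨆ g ∈ G, |∫ x, g x ∂(κ ω) - ∫ x, g x ∂(η ω)|) :=
  stmt1_general Ω S κ η G M hGbdd hGequi
end

section
/- For sequences {μ_n}, {ν_n} of Borel probability measures on ℝ^d, the following are equivalent: (1) |∫ f dμ_n − ∫ f dν_n| → 0 as n → ∞ for every f ∈ Lip(ℝ^d); (2) ‖μ_n − ν_n‖_BL → 0 as n → ∞. -/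
/-!
(2) ⇒ (1) holds because every `f ∈ Lip` is one of the functions in the supremum. For (1) ⇒ (2),
first extend (1) by scaling to all bounded Lipschitz functions, then split a test function as
`f = f χ + f (1 - χ)` with a Lipschitz cutoff `χ` equal to `1` on a ball `B(x₀, R)`. On the compact
ball `B(x₀, R + 1)`, Arzelà–Ascoli gives a finite uniform `δ`-net of `Lip`, and (1) at its finitely
many points controls `f χ`. The tails `f (1 - χ)` are controlled uniformly by a gliding hump: if for
every `R` some Lipschitz function vanishing on `B(x₀, R)` had `|∫ f dμₙ - ∫ f dνₙ| > δ` for infinitely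
many `n`, one could pick such bumps on disjoint annuli, each at a time `n` where the sum of the
previous bumps already has small integral and where `μₙ, νₙ` put little mass beyond the bump. The
sum of all bumps is a bounded Lipschitz function whose integral against `μₙ - νₙ` stays `≥ δ / 4`
along these times, contradicting (1).
-/

open MeasureTheory Filter Metric Set Function
open scoped Topology NNReal BoundedContinuousFunction

variable {X : Type*}

lemma abs_mul_le_one {f g : X → ℝ} (hf : ∀ x, |f x| ≤ 1) (hg : ∀ x, |g x| ≤ 1) (x : X) :
    |(f * g) x| ≤ 1 := by
  rw [Pi.mul_apply, abs_mul]
  exact mul_le_one₀ (hf x) (abs_nonneg _) (hg x)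

lemma abs_sub_abs_sub_abs_le_abs_add_add (a b c : ℝ) : |b| - |a| - |c| ≤ |a + b + c| := by
  have h := abs_add_three (a + b + c) (-a) (-c)
  rw [abs_neg, abs_neg, show a + b + c + -a + -c = b by ring] at h
  linarith

section IntegralDiff

variable [MeasurableSpace X]

noncomputable def integralDiff (μ ν : Measure X) (f : X → ℝ) : ℝ := ∫ x, f x ∂μ - ∫ x, f x ∂ν

variable {μ ν : Measure X} {f : X → ℝ}

lemma integralDiff_const_mul (c : ℝ) :
    integralDiff μ ν (fun x => c * f x) = c * integralDiff μ ν f := by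
  simp only [integralDiff, integral_const_mul, mul_sub]

lemma abs_integralDiff_le [IsProbabilityMeasure μ] [IsProbabilityMeasure ν] {C : ℝ}
    (hC : ∀ x, |f x| ≤ C) : |integralDiff μ ν f| ≤ 2 * C := by
  have h : ∀ m : Measure X, IsProbabilityMeasure m → |∫ x, f x ∂m| ≤ C := fun m _ => by
    simpa using norm_integral_le_of_norm_le_const (μ := m) (f := f) (Eventually.of_forall hC)
  calc |integralDiff μ ν f| ≤ |∫ x, f x ∂μ| + |∫ x, f x ∂ν| := abs_sub _ _
    _ ≤ 2 * C := by linarith [h μ ‹_›, h ν ‹_›]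

lemma abs_integralDiff_le_of_support_subset [IsFiniteMeasure μ] [IsFiniteMeasure ν] {s : Set X}
    (hs : support f ⊆ s) {C : ℝ} (hC : ∀ x, |f x| ≤ C) :
    |integralDiff μ ν f| ≤ C * (μ.real s + ν.real s) := by
  have h : ∀ m : Measure X, IsFiniteMeasure m → |∫ x, f x ∂m| ≤ C * m.real s := fun m _ => by
    rw [← setIntegral_eq_integral_of_forall_compl_eq_zero fun x hx => notMem_support.1 (hx ∘ @hs x)]
    exact norm_setIntegral_le_of_norm_le_const (f := f) (measure_lt_top m s) fun x _ => hC x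
  calc |integralDiff μ ν f| ≤ |∫ x, f x ∂μ| + |∫ x, f x ∂ν| := abs_sub _ _
    _ ≤ C * (μ.real s + ν.real s) := by linarith [h μ ‹_›, h ν ‹_›]

end IntegralDiff

section DisjointSupport

variable {ι : Type*} [Nonempty ι] {f : ι → X → ℝ}

lemma exists_forall_ne_eq_zero_of_pairwise_disjoint
    (hd : Pairwise (Disjoint on fun i => support (f i))) (x : X) :
    ∃ i, ∀ j ≠ i, f j x = 0 := by
  by_cases h : ∃ i, f i x ≠ 0
  · obtain ⟨i, hi⟩ := h
    exact ⟨i, fun j hji => notMem_support.1 fun hj => disjoint_left.1 (hd hji) hj hi⟩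
  · exact ⟨Classical.arbitrary ι, fun j _ => not_not.1 fun hj => h ⟨j, hj⟩⟩

lemma abs_tsum_le_of_pairwise_disjoint (hd : Pairwise (Disjoint on fun i => support (f i)))
    {C : ℝ} (hC : ∀ i x, |f i x| ≤ C) (x : X) : |∑' i, f i x| ≤ C := by
  obtain ⟨i, hi⟩ := exists_forall_ne_eq_zero_of_pairwise_disjoint hd x
  rw [tsum_eq_single i hi]
  exact hC i x

lemma summable_of_pairwise_disjoint (hd : Pairwise (Disjoint on fun i => support (f i))) (x : X) :
    Summable fun i => f i x := by
  obtain ⟨i, hi⟩ := exists_forall_ne_eq_zero_of_pairwise_disjoint hd x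
  exact (hasSum_single i hi).summable

end DisjointSupport

variable [PseudoMetricSpace X]

theorem LipschitzWith.mul_of_abs_le {f g : X → ℝ} {Kf Kg Cf Cg : ℝ≥0}
    (hf : LipschitzWith Kf f) (hg : LipschitzWith Kg g)
    (hfC : ∀ x, |f x| ≤ Cf) (hgC : ∀ x, |g x| ≤ Cg) :
    LipschitzWith (Cf * Kg + Cg * Kf) (f * g) := by
  refine LipschitzWith.of_dist_le_mul fun x y => ?_
  have hfxy := hf.dist_le_mul x y
  have hgxy := hg.dist_le_mul x y
  rw [Real.dist_eq] at hfxy hgxy ⊢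
  calc |f x * g x - f y * g y| = |f x * (g x - g y) + g y * (f x - f y)| := by ring_nf
    _ ≤ |f x| * |g x - g y| + |g y| * |f x - f y| := by
        rw [← abs_mul, ← abs_mul]; exact abs_add_le _ _
    _ ≤ Cf * (Kg * dist x y) + Cg * (Kf * dist x y) := by
        gcongr
        exacts [hfC x, hgC y]
    _ = ↑(Cf * Kg + Cg * Kf) * dist x y := by push_cast; ring

theorem LipschitzWith.tsum_of_pairwise_disjoint {ι : Type*} [Nonempty ι] {f : ι → X → ℝ}
    {K : ℝ≥0} (hf : ∀ i, LipschitzWith K (f i))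
    (hd : Pairwise (Disjoint on fun i => support (f i))) :
    LipschitzWith (2 * K) fun x => ∑' i, f i x := by
  refine LipschitzWith.of_dist_le_mul fun x y => ?_
  obtain ⟨i, hi⟩ := exists_forall_ne_eq_zero_of_pairwise_disjoint hd x
  obtain ⟨j, hj⟩ := exists_forall_ne_eq_zero_of_pairwise_disjoint hd y
  have hfi := (hf i).dist_le_mul x y
  have hfj := (hf j).dist_le_mul x y
  rw [Real.dist_eq] at hfi hfj ⊢
  rw [tsum_eq_single i hi, tsum_eq_single j hj]
  push_cast
  rcases eq_or_ne i j with rfl | hij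
  · linarith [show 0 ≤ (K : ℝ) * dist x y by positivity]
  · -- `f i` vanishes at `y` and `f j` at `x`, so the difference splits into two increments
    calc |f i x - f j y| = |(f i x - f i y) + (f j x - f j y)| := by
          rw [hj i hij, hi j hij.symm]; ring_nf
      _ ≤ |f i x - f i y| + |f j x - f j y| := abs_add_le _ _
      _ ≤ 2 * K * dist x y := by linarith

variable (X) in
def boundedLipschitz : Subalgebra ℝ (X → ℝ) where
  carrier := {f | (∃ C : ℝ≥0, ∀ x, |f x| ≤ C) ∧ ∃ K, LipschitzWith K f}
  mul_mem' := by
    rintro f g ⟨⟨Cf, hCf⟩, Kf, hKf⟩ ⟨⟨Cg, hCg⟩, Kg, hKg⟩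
    refine ⟨⟨Cf * Cg, fun x => ?_⟩, _, hKf.mul_of_abs_le hKg hCf hCg⟩
    rw [Pi.mul_apply, abs_mul, NNReal.coe_mul]
    exact mul_le_mul (hCf x) (hCg x) (abs_nonneg _) Cf.2
  add_mem' := by
    rintro f g ⟨⟨Cf, hCf⟩, Kf, hKf⟩ ⟨⟨Cg, hCg⟩, Kg, hKg⟩
    refine ⟨⟨Cf + Cg, fun x => ?_⟩, _, hKf.add hKg⟩
    exact (abs_add_le _ _).trans (add_le_add (hCf x) (hCg x))
  algebraMap_mem' c := ⟨⟨‖c‖₊, fun _ => le_rfl⟩, 0, LipschitzWith.const c⟩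

lemma LipschitzWith.mem_boundedLipschitz {f : X → ℝ} {K : ℝ≥0} (hf : LipschitzWith K f)
    (hb : ∀ x, |f x| ≤ 1) : f ∈ boundedLipschitz X :=
  ⟨⟨1, by simpa using hb⟩, K, hf⟩

lemma tsum_mem_boundedLipschitz {ι : Type*} [Nonempty ι] {f : ι → X → ℝ} {K : ℝ≥0}
    (hf : ∀ i, LipschitzWith K (f i)) (hb : ∀ i x, |f i x| ≤ 1)
    (hd : Pairwise (Disjoint on fun i => support (f i))) :
    (fun x => ∑' i, f i x) ∈ boundedLipschitz X :=
  (LipschitzWith.tsum_of_pairwise_disjoint hf hd).mem_boundedLipschitz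
    (abs_tsum_le_of_pairwise_disjoint hd hb)

variable (X) in
def lipUnitBall : Set (X → ℝ) := {f | (∀ x, |f x| ≤ 1) ∧ LipschitzWith 1 f}

lemma lipUnitBall_subset_boundedLipschitz : lipUnitBall X ⊆ boundedLipschitz X :=
  fun _ hf => hf.2.mem_boundedLipschitz hf.1

/-- Arzelà–Ascoli, applied in `K →ᵇ ℝ`. -/
lemma IsCompact.exists_finite_approx_lipUnitBall {K : Set X} (hK : IsCompact K) {δ : ℝ}
    (hδ : 0 < δ) :
    ∃ G ⊆ lipUnitBall X, G.Finite ∧ ∀ f ∈ lipUnitBall X, ∃ g ∈ G, ∀ x ∈ K, |f x - g x| < δ := by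
  have := isCompact_iff_compactSpace.1 hK
  let r : lipUnitBall X → (K →ᵇ ℝ) := fun f =>
    BoundedContinuousFunction.mkOfCompact
      ⟨fun x => f.1 x, f.2.2.continuous.comp continuous_subtype_val⟩
  have hr : ∀ f, LipschitzWith 1 (r f) := fun f =>
    LipschitzWith.of_dist_le_mul fun x y => by
      simpa [r, Subtype.dist_eq] using f.2.2.dist_le_mul x y
  have hcpt : IsCompact (closure (range r)) :=
    BoundedContinuousFunction.arzela_ascoli (Icc (-1) 1) isCompact_Icc (range r)
      (by rintro _ x ⟨f, rfl⟩; exact abs_le.1 (f.2.1 x))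
      (LipschitzWith.uniformEquicontinuous _ 1 (by rintro ⟨_, f, rfl⟩; exact hr f)).equicontinuous
  obtain ⟨t, htr, htfin, hcover⟩ :=
    finite_approx_of_totallyBounded (hcpt.totallyBounded.subset subset_closure) δ hδ
  rw [← image_univ] at htr
  obtain ⟨s, -, hsfin, hcover⟩ :=
    exists_subset_image_finite_and (p := fun t => range r ⊆ ⋃ y ∈ t, ball y δ) |>.1
      ⟨t, htr, htfin, hcover⟩
  refine ⟨Subtype.val '' s, by rintro _ ⟨f, -, rfl⟩; exact f.2, hsfin.image _, fun f hf => ?_⟩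
  obtain ⟨_, ⟨g, hg, rfl⟩, hfg⟩ := mem_iUnion₂.1 (hcover (mem_range_self ⟨f, hf⟩))
  refine ⟨g, mem_image_of_mem _ hg, fun x hx => ?_⟩
  simpa [r, Real.dist_eq] using
    (BoundedContinuousFunction.dist_coe_le_dist ⟨x, hx⟩).trans_lt (mem_ball.1 hfg)

section RadialCutoff

noncomputable def radialCutoff (x₀ : X) (R : ℝ) (x : X) : ℝ := max 0 (min 1 (R + 1 - dist x x₀))

variable {x₀ : X} {R : ℝ}

lemma lipschitzWith_radialCutoff : LipschitzWith 1 (radialCutoff x₀ R) := by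
  unfold radialCutoff
  simpa using
    (((LipschitzWith.const (R + 1)).sub (LipschitzWith.dist_left x₀)).const_min 1).const_max 0

lemma radialCutoff_mem_Icc (x : X) : radialCutoff x₀ R x ∈ Icc 0 1 :=
  ⟨le_max_left _ _, max_le zero_le_one (min_le_left _ _)⟩

lemma abs_radialCutoff_le_one (x : X) : |radialCutoff x₀ R x| ≤ 1 := by
  obtain ⟨h0, h1⟩ := radialCutoff_mem_Icc (x₀ := x₀) (R := R) x
  exact abs_le.2 ⟨by linarith, h1⟩

lemma abs_one_sub_radialCutoff_le_one (x : X) : |(1 - radialCutoff x₀ R) x| ≤ 1 := by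
  rw [Pi.sub_apply, Pi.one_apply]
  obtain ⟨h0, h1⟩ := radialCutoff_mem_Icc (x₀ := x₀) (R := R) x
  exact abs_le.2 ⟨by linarith, by linarith⟩

lemma lipschitzWith_one_sub_radialCutoff : LipschitzWith 1 (1 - radialCutoff x₀ R) := by
  have h := (LipschitzWith.const (1 : ℝ)).sub (lipschitzWith_radialCutoff (x₀ := x₀) (R := R))
  rw [zero_add] at h
  exact h

lemma radialCutoff_mem_boundedLipschitz : radialCutoff x₀ R ∈ boundedLipschitz X :=
  lipschitzWith_radialCutoff.mem_boundedLipschitz abs_radialCutoff_le_one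

lemma LipschitzWith.mul_one_sub_radialCutoff {f : X → ℝ} (hf : LipschitzWith 1 f)
    (hb : ∀ x, |f x| ≤ 1) : LipschitzWith 2 (f * (1 - radialCutoff x₀ R)) := by
  simpa [one_add_one_eq_two] using LipschitzWith.mul_of_abs_le (Cf := 1) (Cg := 1) hf
    lipschitzWith_one_sub_radialCutoff (by simpa using hb)
    (by simpa using abs_one_sub_radialCutoff_le_one)

lemma support_radialCutoff_subset : support (radialCutoff x₀ R) ⊆ ball x₀ (R + 1) := by
  intro x hx
  by_contra h
  refine hx (max_eq_left (min_le_of_right_le ?_))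
  rw [mem_ball, not_lt] at h
  linarith

lemma support_one_sub_radialCutoff_subset :
    support (1 - radialCutoff x₀ R) ⊆ (closedBall x₀ R)ᶜ := by
  intro x hx h
  refine hx (sub_eq_zero.2 ?_)
  rw [mem_closedBall] at h
  rw [radialCutoff, min_eq_left (by linarith), max_eq_right zero_le_one]
  rfl

lemma abs_mul_radialCutoff_le {u : X → ℝ} {ε : ℝ} (hε : 0 ≤ ε)
    (hu : ∀ x ∈ closedBall x₀ (R + 1), |u x| ≤ ε) (x : X) : |(u * radialCutoff x₀ R) x| ≤ ε := by
  rw [Pi.mul_apply, abs_mul]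
  by_cases hx : x ∈ closedBall x₀ (R + 1)
  · exact (mul_le_of_le_one_right (abs_nonneg _) (abs_radialCutoff_le_one x)).trans (hu x hx)
  · rw [notMem_support.1 fun h => hx (ball_subset_closedBall (support_radialCutoff_subset h)),
      abs_zero, mul_zero]
    exact hε

end RadialCutoff

lemma pairwise_disjoint_annulus {x₀ : X} {S : ℕ → ℝ} (hS : Monotone S) :
    Pairwise (Disjoint on fun k => ball x₀ (S (k + 1)) \ closedBall x₀ (S k)) := by
  intro i j hij
  wlog h : i < j generalizing i j
  · exact (this hij.symm (lt_of_le_of_ne (not_lt.1 h) hij.symm)).symm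
  exact disjoint_left.2 fun x hxi hxj =>
    hxj.2 (mem_closedBall.2 ((mem_ball.1 hxi.1).le.trans (hS (Nat.succ_le_of_lt h))))

lemma support_tsum_nat_add_subset {x₀ : X} {S : ℕ → ℝ} (hS : Monotone S) {f : ℕ → X → ℝ}
    (hf : ∀ j, support (f j) ⊆ (closedBall x₀ (S j))ᶜ) (m : ℕ) :
    support (fun x => ∑' j, f (j + m) x) ⊆ (closedBall x₀ (S m))ᶜ := by
  intro x hx hxS
  refine hx ((tsum_congr fun j => notMem_support.1 fun hj => ?_).trans tsum_zero)
  exact hf _ hj (closedBall_subset_closedBall (hS (Nat.le_add_left m j)) hxS)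

section Integrable

variable [MeasurableSpace X] [OpensMeasurableSpace X] {μ ν : Measure X} [IsFiniteMeasure μ]
  [IsFiniteMeasure ν] {f g : X → ℝ}

lemma integrable_of_mem_boundedLipschitz (hf : f ∈ boundedLipschitz X) : Integrable f μ := by
  obtain ⟨⟨C, hC⟩, K, hK⟩ := hf
  exact Integrable.of_bound hK.continuous.aestronglyMeasurable C (Eventually.of_forall hC)

lemma integralDiff_add (hf : f ∈ boundedLipschitz X) (hg : g ∈ boundedLipschitz X) :
    integralDiff μ ν (f + g) = integralDiff μ ν f + integralDiff μ ν g := by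
  simp only [integralDiff, Pi.add_apply]
  rw [integral_add (integrable_of_mem_boundedLipschitz hf) (integrable_of_mem_boundedLipschitz hg),
    integral_add (integrable_of_mem_boundedLipschitz hf) (integrable_of_mem_boundedLipschitz hg)]
  ring

lemma tendsto_measureReal_compl_closedBall (x₀ : X) :
    Tendsto (fun r : ℝ => μ.real (closedBall x₀ r)ᶜ) atTop (𝓝 0) := by
  have h := tendsto_measure_iInter_atTop (μ := μ) (s := fun r : ℝ => (closedBall x₀ r)ᶜ)
    (fun _ => measurableSet_closedBall.compl.nullMeasurableSet)
    (fun _ _ h => compl_subset_compl.2 (closedBall_subset_closedBall h)) ⟨0, measure_ne_top _ _⟩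
  have hempty : ⋂ r : ℝ, (closedBall x₀ r)ᶜ = ∅ :=
    eq_empty_iff_forall_notMem.2 fun x hx => mem_iInter.1 hx (dist x x₀) (mem_closedBall.2 le_rfl)
  rw [hempty, measure_empty] at h
  exact (ENNReal.tendsto_toReal ENNReal.zero_ne_top).comp h

end Integrable

section Convergence

variable [MeasurableSpace X]

def IntegralDiffTendstoZero (μ ν : ℕ → Measure X) (s : Set (X → ℝ)) : Prop :=
  ∀ f ∈ s, Tendsto (fun n => integralDiff (μ n) (ν n) f) atTop (𝓝 0)

variable {μ ν : ℕ → Measure X}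

lemma IntegralDiffTendstoZero.to_boundedLipschitz
    (h : IntegralDiffTendstoZero μ ν (lipUnitBall X)) :
    IntegralDiffTendstoZero μ ν (boundedLipschitz X) := by
  rintro f ⟨⟨C, hC⟩, K, hK⟩
  set c : ℝ≥0 := max (max C K) 1
  have hc : (0 : ℝ) < c := lt_of_lt_of_le one_pos (le_max_right _ _)
  have hg : (fun x => (c : ℝ)⁻¹ * f x) ∈ lipUnitBall X := by
    refine ⟨fun x => ?_, ?_⟩
    · rw [abs_mul, abs_inv, abs_of_pos hc, inv_mul_le_one₀ hc]
      exact (hC x).trans (le_trans (le_max_left _ _) (le_max_left _ _))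
    · refine ((lipschitzWith_smul (c : ℝ)⁻¹).comp hK).weaken ?_
      rw [nnnorm_inv, NNReal.nnnorm_eq, inv_mul_le_one₀ (by exact_mod_cast hc)]
      exact le_trans (le_max_right _ _) (le_max_left _ _)
  have hfc : f = fun x => (c : ℝ) * ((c : ℝ)⁻¹ * f x) := by
    ext x; rw [mul_inv_cancel_left₀ hc.ne']
  rw [hfc]
  simpa only [integralDiff_const_mul, mul_zero] using (h _ hg).const_mul (c : ℝ)

end Convergence

section GlidingHump

variable [MeasurableSpace X] [OpensMeasurableSpace X] {μ ν : ℕ → Measure X}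
  [∀ n, IsFiniteMeasure (μ n)] [∀ n, IsFiniteMeasure (ν n)] {δ : ℝ}

lemma exists_bump {x₀ : X} {L : ℝ≥0} (hlim : IntegralDiffTendstoZero μ ν (boundedLipschitz X))
    (hδ : 0 < δ)
    (hbad : ∀ R, ∃ᶠ n in atTop, ∃ f : X → ℝ, (∀ x, |f x| ≤ 1) ∧ LipschitzWith L f ∧
      support f ⊆ (closedBall x₀ R)ᶜ ∧ δ < |integralDiff (μ n) (ν n) f|)
    (N : ℕ) (S : ℝ) (P : boundedLipschitz X) :
    ∃ n > N, ∃ T > S, ∃ g : X → ℝ, (∀ x, |g x| ≤ 1) ∧ LipschitzWith (L + 1) g ∧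
      support g ⊆ ball x₀ T \ closedBall x₀ S ∧ 3 * δ / 4 < |integralDiff (μ n) (ν n) g| ∧
      |integralDiff (μ n) (ν n) P| < δ / 4 ∧
      (μ n).real (closedBall x₀ T)ᶜ + (ν n).real (closedBall x₀ T)ᶜ < δ / 4 := by
  have hP : ∀ᶠ n in atTop, |integralDiff (μ n) (ν n) P| < δ / 4 :=
    ((tendsto_zero_iff_abs_tendsto_zero _).1 (hlim P P.2)).eventually_lt_const (by positivity)
  obtain ⟨n, ⟨f, hf1, hfL, hfS, hfδ⟩, hPn, hnN⟩ :=
    ((hbad S).and_eventually (hP.and (eventually_gt_atTop N))).exists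
  have htail := ((tendsto_measureReal_compl_closedBall (μ := μ n) x₀).add
    (tendsto_measureReal_compl_closedBall (μ := ν n) x₀)).eventually_lt_const
    (show (0 : ℝ) + 0 < δ / 4 by linarith)
  obtain ⟨r, hr, hr1, hSr⟩ :=
    (htail.and ((tendsto_atTop_add_const_right _ 1 tendsto_id).eventually htail |>.and
      (eventually_ge_atTop S))).exists
  have hf : f ∈ boundedLipschitz X := hfL.mem_boundedLipschitz hf1
  have hcut : radialCutoff x₀ r ∈ boundedLipschitz X := radialCutoff_mem_boundedLipschitz
  -- the truncation error `f * (1 - cutoff)` lives where both measures have mass `< δ / 4`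
  have htrunc : |integralDiff (μ n) (ν n) (f * (1 - radialCutoff x₀ r))| < δ / 4 := by
    refine (abs_integralDiff_le_of_support_subset
      ((support_mul_subset_right _ _).trans support_one_sub_radialCutoff_subset)
      (abs_mul_le_one hf1 abs_one_sub_radialCutoff_le_one)).trans_lt (by simpa using hr)
  refine ⟨n, hnN, r + 1, by linarith, f * radialCutoff x₀ r,
    abs_mul_le_one hf1 abs_radialCutoff_le_one, ?_, ?_, ?_, hPn, hr1⟩
  · simpa [add_comm] using hfL.mul_of_abs_le lipschitzWith_radialCutoff (Cf := 1) (Cg := 1)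
      (by simpa using hf1) (by simpa using abs_radialCutoff_le_one)
  · rw [support_mul', Set.sdiff_eq, inter_comm]
    exact inter_subset_inter support_radialCutoff_subset fun x hx => hfS hx
  · have hsplit := integralDiff_add (μ := μ n) (ν := ν n) (mul_mem hf hcut)
      (mul_mem hf (sub_mem (one_mem _) hcut))
    rw [← mul_add, add_sub_cancel, mul_one] at hsplit
    rw [hsplit] at hfδ
    linarith [abs_add_le (integralDiff (μ n) (ν n) (f * radialCutoff x₀ r))
      (integralDiff (μ n) (ν n) (f * (1 - radialCutoff x₀ r)))]


lemma exists_bump_sequence {x₀ : X} {L : ℝ≥0}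
    (hlim : IntegralDiffTendstoZero μ ν (boundedLipschitz X)) (hδ : 0 < δ)
    (hbad : ∀ R, ∃ᶠ n in atTop, ∃ f : X → ℝ, (∀ x, |f x| ≤ 1) ∧ LipschitzWith L f ∧
      support f ⊆ (closedBall x₀ R)ᶜ ∧ δ < |integralDiff (μ n) (ν n) f|) :
    ∃ (n : ℕ → ℕ) (S : ℕ → ℝ) (f : ℕ → X → ℝ), StrictMono n ∧ StrictMono S ∧ ∀ k,
      (∀ x, |f k x| ≤ 1) ∧ LipschitzWith (L + 1) (f k) ∧
      support (f k) ⊆ ball x₀ (S (k + 1)) \ closedBall x₀ (S k) ∧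
      3 * δ / 4 < |integralDiff (μ (n k)) (ν (n k)) (f k)| ∧
      |integralDiff (μ (n k)) (ν (n k)) (∑ j ∈ Finset.range k, f j)| < δ / 4 ∧
      (μ (n k)).real (closedBall x₀ (S (k + 1)))ᶜ +
        (ν (n k)).real (closedBall x₀ (S (k + 1)))ᶜ < δ / 4 := by
  choose n hn T hT g hg1 hgL hgS hgδ hP htail using exists_bump hlim hδ hbad
  -- state: (time of the last bump, current radius, sum of the bumps chosen so far)
  let next : ℕ × ℝ × boundedLipschitz X → ℕ × ℝ × boundedLipschitz X := fun s =>
    (n s.1 s.2.1 s.2.2, T s.1 s.2.1 s.2.2,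
      s.2.2 + ⟨g s.1 s.2.1 s.2.2, (hgL _ _ _).mem_boundedLipschitz (hg1 _ _ _)⟩)
  let s : ℕ → ℕ × ℝ × boundedLipschitz X := fun k => next^[k] (0, 0, 0)
  have hs : ∀ k, s (k + 1) = next (s k) := fun k => iterate_succ_apply' next k _
  let b : ℕ → X → ℝ := fun k => g (s k).1 (s k).2.1 (s k).2.2
  have hsum : ∀ k, ((s k).2.2 : X → ℝ) = ∑ j ∈ Finset.range k, b j := by
    intro k
    induction k with
    | zero => simp [s]
    | succ k ih => rw [hs, Finset.sum_range_succ, ← ih]; rfl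
  refine ⟨fun k => (s (k + 1)).1, fun k => (s k).2.1, b,
    strictMono_nat_of_lt_succ fun k => ?_, strictMono_nat_of_lt_succ fun k => ?_, fun k => ?_⟩
  · rw [hs (k + 1)]; exact hn _ _ _
  · rw [hs k]; exact hT _ _ _
  · simp only [hs k, ← hsum]
    exact ⟨hg1 _ _ _, hgL _ _ _, hgS _ _ _, hgδ _ _ _, hP _ _ _, htail _ _ _⟩

lemma IntegralDiffTendstoZero.exists_tail_bound
    (hlim : IntegralDiffTendstoZero μ ν (boundedLipschitz X)) (x₀ : X) (L : ℝ≥0) (hδ : 0 < δ) :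
    ∃ R, ∀ᶠ n in atTop, ∀ f : X → ℝ, (∀ x, |f x| ≤ 1) → LipschitzWith L f →
      support f ⊆ (closedBall x₀ R)ᶜ → |integralDiff (μ n) (ν n) f| ≤ δ := by
  by_contra! hbad
  obtain ⟨n, S, f, hn, hS, hf⟩ := exists_bump_sequence hlim hδ hbad
  have hd : Pairwise (Disjoint on fun k => support (f k)) := fun i j hij =>
    (pairwise_disjoint_annulus hS.monotone hij).mono (hf i).2.2.1 (hf j).2.2.1
  have hF : (fun x => ∑' k, f k x) ∈ boundedLipschitz X :=
    tsum_mem_boundedLipschitz (fun k => (hf k).2.1) (fun k => (hf k).1) hd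
  have hlow : ∀ k, δ / 4 < |integralDiff (μ (n k)) (ν (n k)) fun x => ∑' k, f k x| := by
    intro k
    obtain ⟨-, -, -, hfk, hPk, hmass⟩ := hf k
    have hdt : Pairwise (Disjoint on fun j => support (f (j + (k + 1)))) :=
      hd.comp_of_injective (add_left_injective _)
    have htail : (fun x => ∑' j, f (j + (k + 1)) x) ∈ boundedLipschitz X :=
      tsum_mem_boundedLipschitz (fun j => (hf _).2.1) (fun j => (hf _).1) hdt
    have htail_supp := support_tsum_nat_add_subset hS.monotone
      (fun j => (hf j).2.2.1.trans (sdiff_subset_compl _ _)) (k + 1)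
    have hsplit : (fun x => ∑' k, f k x) =
        (∑ j ∈ Finset.range k, f j) + f k + fun x => ∑' j, f (j + (k + 1)) x := by
      ext x
      rw [Pi.add_apply, Pi.add_apply, Finset.sum_apply, ← Finset.sum_range_succ,
        (summable_of_pairwise_disjoint hd x).sum_add_tsum_nat_add]
    have hPmem : ∑ j ∈ Finset.range k, f j ∈ boundedLipschitz X :=
      sum_mem fun j _ => (hf j).2.1.mem_boundedLipschitz (hf j).1
    have hfmem : f k ∈ boundedLipschitz X := (hf k).2.1.mem_boundedLipschitz (hf k).1
    have htail_le := abs_integralDiff_le_of_support_subset (μ := μ (n k)) (ν := ν (n k))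
      htail_supp (C := 1) (abs_tsum_le_of_pairwise_disjoint hdt fun j => (hf _).1)
    rw [hsplit, integralDiff_add (add_mem hPmem hfmem) htail, integralDiff_add hPmem hfmem]
    linarith [abs_sub_abs_sub_abs_le_abs_add_add
      (integralDiff (μ (n k)) (ν (n k)) (∑ j ∈ Finset.range k, f j))
      (integralDiff (μ (n k)) (ν (n k)) (f k))
      (integralDiff (μ (n k)) (ν (n k)) fun x => ∑' j, f (j + (k + 1)) x)]
  obtain ⟨k, hk⟩ := (((tendsto_zero_iff_abs_tendsto_zero _).1
    ((hlim _ hF).comp hn.tendsto_atTop)).eventually_lt_const (by positivity : 0 < δ / 4)).exists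
  exact (hlow k).not_gt hk

end GlidingHump

section BLDistance

variable [MeasurableSpace X]

/-- `‖μ - ν‖_BL`. For probability measures the supremum is bounded by `2`, so `⨆` never takes its
junk value `0`. -/
noncomputable def blDist (μ ν : Measure X) : ℝ := ⨆ f ∈ lipUnitBall X, |integralDiff μ ν f|

variable {μ ν : Measure X}

lemma blDist_nonneg : 0 ≤ blDist μ ν :=
  Real.iSup_nonneg fun _ => Real.iSup_nonneg fun _ => abs_nonneg _

lemma blDist_le {ε : ℝ} (hε : 0 ≤ ε) (h : ∀ f ∈ lipUnitBall X, |integralDiff μ ν f| ≤ ε) :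
    blDist μ ν ≤ ε :=
  Real.iSup_le (fun f => Real.iSup_le (h f) hε) hε

lemma abs_integralDiff_le_blDist [IsProbabilityMeasure μ] [IsProbabilityMeasure ν] {f : X → ℝ}
    (hf : f ∈ lipUnitBall X) : |integralDiff μ ν f| ≤ blDist μ ν := by
  have hbdd : BddAbove (range fun g => ⨆ _ : g ∈ lipUnitBall X, |integralDiff μ ν g|) := by
    refine ⟨2, ?_⟩
    rintro _ ⟨g, rfl⟩
    exact Real.iSup_le (fun hg => (abs_integralDiff_le hg.1).trans_eq (mul_one 2)) zero_le_two
  calc |integralDiff μ ν f| = ⨆ _ : f ∈ lipUnitBall X, |integralDiff μ ν f| :=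
        (ciSup_pos (f := fun _ => |integralDiff μ ν f|) hf).symm
    _ ≤ blDist μ ν := le_ciSup hbdd f

end BLDistance

theorem IntegralDiffTendstoZero.eventually_forall_abs_le [ProperSpace X] [MeasurableSpace X]
    [OpensMeasurableSpace X] {μ ν : ℕ → Measure X} [∀ n, IsProbabilityMeasure (μ n)]
    [∀ n, IsProbabilityMeasure (ν n)] (h : IntegralDiffTendstoZero μ ν (lipUnitBall X)) {ε : ℝ}
    (hε : 0 < ε) : ∀ᶠ n in atTop, ∀ f ∈ lipUnitBall X, |integralDiff (μ n) (ν n) f| ≤ ε := by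
  have hlim := h.to_boundedLipschitz
  obtain ⟨x₀⟩ := nonempty_of_isProbabilityMeasure (μ 0)
  obtain ⟨R, hR⟩ := hlim.exists_tail_bound x₀ 2 (by positivity : 0 < ε / 4)
  obtain ⟨G, hGsub, hGfin, hGapprox⟩ :=
    (isCompact_closedBall x₀ (R + 1)).exists_finite_approx_lipUnitBall (by positivity : 0 < ε / 4)
  have hcut : radialCutoff x₀ R ∈ boundedLipschitz X := radialCutoff_mem_boundedLipschitz
  have hG : ∀ᶠ n in atTop, ∀ g ∈ G,
      |integralDiff (μ n) (ν n) (g * radialCutoff x₀ R)| < ε / 4 :=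
    (eventually_all_finite hGfin).2 fun g hg => ((tendsto_zero_iff_abs_tendsto_zero _).1
      (hlim _ (mul_mem (lipUnitBall_subset_boundedLipschitz (hGsub hg)) hcut))).eventually_lt_const
      (by positivity)
  filter_upwards [hR, hG] with n hRn hGn f hf
  obtain ⟨g, hgG, hfg⟩ := hGapprox f hf
  have hfB := lipUnitBall_subset_boundedLipschitz hf
  have hgB := lipUnitBall_subset_boundedLipschitz (hGsub hgG)
  have hfar : |integralDiff (μ n) (ν n) (f * (1 - radialCutoff x₀ R))| ≤ ε / 4 :=
    hRn _ (abs_mul_le_one hf.1 abs_one_sub_radialCutoff_le_one) (hf.2.mul_one_sub_radialCutoff hf.1)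
      ((support_mul_subset_right _ _).trans support_one_sub_radialCutoff_subset)
  have hnear : |integralDiff (μ n) (ν n) ((f - g) * radialCutoff x₀ R)| ≤ 2 * (ε / 4) :=
    abs_integralDiff_le (abs_mul_radialCutoff_le (by positivity) fun x hx => (hfg x hx).le)
  have hsplit : f = g * radialCutoff x₀ R + (f - g) * radialCutoff x₀ R +
      f * (1 - radialCutoff x₀ R) := by ring
  rw [hsplit, integralDiff_add (add_mem (mul_mem hgB hcut) (mul_mem (sub_mem hfB hgB) hcut))
    (mul_mem hfB (sub_mem (one_mem _) hcut)),
    integralDiff_add (mul_mem hgB hcut) (mul_mem (sub_mem hfB hgB) hcut)]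
  linarith [abs_add_three (integralDiff (μ n) (ν n) (g * radialCutoff x₀ R))
    (integralDiff (μ n) (ν n) ((f - g) * radialCutoff x₀ R))
    (integralDiff (μ n) (ν n) (f * (1 - radialCutoff x₀ R))), hGn g hgG]

theorem IntegralDiffTendstoZero.tendsto_blDist [ProperSpace X] [MeasurableSpace X]
    [OpensMeasurableSpace X] {μ ν : ℕ → Measure X} [∀ n, IsProbabilityMeasure (μ n)]
    [∀ n, IsProbabilityMeasure (ν n)] (h : IntegralDiffTendstoZero μ ν (lipUnitBall X)) :
    Tendsto (fun n => blDist (μ n) (ν n)) atTop (𝓝 0) := by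
  refine tendsto_order.2 ⟨fun a ha => Eventually.of_forall fun _ => ha.trans_le blDist_nonneg,
    fun a ha => ?_⟩
  filter_upwards [h.eventually_forall_abs_le (half_pos ha)] with n hn
  exact (blDist_le (half_pos ha).le hn).trans_lt (half_lt_self ha)

theorem tendsto_abs_integralDiff_iff_tendsto_blDist [ProperSpace X] [MeasurableSpace X]
    [OpensMeasurableSpace X] (μ ν : ℕ → Measure X) [∀ n, IsProbabilityMeasure (μ n)]
    [∀ n, IsProbabilityMeasure (ν n)] :
    (∀ f : X → ℝ, (∀ x, |f x| ≤ 1) → LipschitzWith 1 f →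
      Tendsto (fun n => |integralDiff (μ n) (ν n) f|) atTop (𝓝 0)) ↔
    Tendsto (fun n => blDist (μ n) (ν n)) atTop (𝓝 0) :=
  ⟨fun h => IntegralDiffTendstoZero.tendsto_blDist fun f hf =>
      (tendsto_zero_iff_abs_tendsto_zero _).2 (h f hf.1 hf.2),
    fun h _ hf1 hfL => squeeze_zero (fun _ => abs_nonneg _)
      (fun _ => abs_integralDiff_le_blDist ⟨hf1, hfL⟩) h⟩

/-- **Corollary B.4.** For sequences of Borel probability measures on
`ℝ^d`, convergence `|∫ f dμₙ - ∫ f dνₙ| → 0` for every fixed `f ∈ Lip(ℝ^d)` is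
equivalent to `‖μₙ - νₙ‖_BL → 0`, where
`‖μ - ν‖_BL = sup_{f ∈ Lip(ℝ^d)} |∫ f dμ - ∫ f dν|`. -/
theorem stmt3 (d : ℕ)
    (μ ν : ℕ → Measure (EuclideanSpace ℝ (Fin d)))
    (hμ : ∀ n, IsProbabilityMeasure (μ n)) (hν : ∀ n, IsProbabilityMeasure (ν n)) :
    (∀ f : EuclideanSpace ℝ (Fin d) → ℝ, (∀ x, |f x| ≤ 1) → LipschitzWith 1 f →
      Filter.Tendsto (fun n => |∫ x, f x ∂(μ n) - ∫ x, f x ∂(ν n)|)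
        Filter.atTop (nhds 0)) ↔
    Filter.Tendsto (fun n =>
        ⨆ f ∈ {f : EuclideanSpace ℝ (Fin d) → ℝ | (∀ x, |f x| ≤ 1) ∧ LipschitzWith 1 f},
          |∫ x, f x ∂(μ n) - ∫ x, f x ∂(ν n)|)
      Filter.atTop (nhds 0) :=
  tendsto_abs_integralDiff_iff_tendsto_blDist μ ν
end

section
/- Let A be a real d × d matrix and C a real q × d matrix. The following are equivalent: (1) the dq × d matrix O(A,C) obtained by stacking the matrices C, CA, CA², …, CA^{d−1} has full rank d; (2) there exist k ∈ ℕ, times t₁, …, t_k ≥ 0, and a linear map f : (ℝ^q)^k → ℝ^d such that f(∫₀^{t₁} C e^{sA} x ds, …, ∫₀^{t_k} C e^{sA} x ds) = x for all x ∈ ℝ^d. -/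
/-!
Both conditions say that `0` is the only state with identically vanishing output.
By Cayley–Hamilton, `C Aⁱ x = 0` for `i < d` forces `C Aⁿ x = 0` for all `n`, hence
`C e^{sA} x = 0` by the power series of the exponential. Conversely, if `∫₀ᵗ C e^{sA} x ds = 0`
for all `t ≥ 0`, then every `s ↦ C e^{sA} Aⁿ x` vanishes on `[0, ∞)`: its derivative is the next
one, and a derivative is determined by one-sided values. Evaluating at `s = 0` gives `C Aⁿ x = 0`.
Finally, subspaces of `ℝᵈ` satisfy the descending chain condition, so finitely many of the
kernels of `x ↦ ∫₀ᵗ C e^{sA} x ds` already intersect in `0`, and the resulting injective map has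
a linear left inverse.
-/

open MeasureTheory Matrix NormedSpace Set Submodule

theorem exists_fin_iInf_eq_iInf {α ι : Type*} [CompleteLattice α] [WellFoundedLT α] (K : ι → α) :
    ∃ (k : ℕ) (t : Fin k → ι), ⨅ i, K (t i) = ⨅ i, K i := by
  classical
  obtain ⟨_, ⟨s, rfl⟩, hmin⟩ := wellFounded_lt.has_min (range fun s : Finset ι => ⨅ i ∈ s, K i)
    ⟨_, mem_range_self ∅⟩
  have hs : ⨅ i ∈ s, K i = ⨅ i, K i := by
    refine le_antisymm (le_iInf fun j => ?_) (le_iInf₂ fun i _ => iInf_le K i)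
    by_contra hj
    refine hmin _ ⟨insert j s, rfl⟩ ?_
    show ⨅ i ∈ insert j s, K i < ⨅ i ∈ s, K i
    rw [Finset.iInf_insert]
    exact inf_lt_right.2 hj
  refine ⟨s.card, fun i => s.equivFin.symm i, ?_⟩
  rw [← hs, s.equivFin.symm.iInf_comp (g := fun i : s => K i), iInf_subtype']

theorem Matrix.rank_eq_card_iff_ker_mulVecLin_eq_bot {m n K : Type*} [Field K] [Fintype n]
    (M : Matrix m n K) : M.rank = Fintype.card n ↔ LinearMap.ker M.mulVecLin = ⊥ := by
  have h := LinearMap.finrank_range_add_finrank_ker M.mulVecLin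
  rw [Module.finrank_fintype_fun_eq_card] at h
  rw [← Submodule.finrank_eq_zero, Matrix.rank]
  omega

theorem Matrix.pow_mem_span_pow_lt_card {n R : Type*} [Fintype n] [DecidableEq n] [CommRing R]
    [Nontrivial R] (A : Matrix n n R) (k : ℕ) :
    A ^ k ∈ span R ((A ^ ·) '' Iio (Fintype.card n)) := by
  rw [pow_eq_aeval_mod_charpoly, Polynomial.aeval_eq_sum_range]
  refine sum_mem fun i _ => ?_
  by_cases hi : i < Fintype.card n
  · exact smul_mem _ _ (subset_span ⟨i, hi, rfl⟩)
  · rw [Polynomial.coeff_eq_zero_of_degree_lt, zero_smul]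
    · exact zero_mem _
    · calc _ < A.charpoly.degree := Polynomial.degree_modByMonic_lt _ A.charpoly_monic
        _ = Fintype.card n := A.charpoly_degree_eq_dim
        _ ≤ i := by exact_mod_cast not_lt.1 hi

theorem eqOn_zero_of_hasDerivAt {E : Type*} [NormedAddCommGroup E] [NormedSpace ℝ E]
    {F G : ℝ → E} {a : ℝ} (hFG : ∀ t, HasDerivAt F (G t) t) (hF : EqOn F 0 (Ici a)) :
    EqOn G 0 (Ici a) := fun t ht =>
  (uniqueDiffWithinAt_Ici t).eq_deriv _ (hFG t).hasDerivWithinAt <|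
    (hasDerivWithinAt_const t _ 0).congr (fun _ hs => hF (Ici_subset_Ici.2 ht hs)) (hF ht)

section BanachAlgebra

variable {𝔸 E : Type*} [NormedRing 𝔸] [NormedAlgebra ℝ 𝔸] [CompleteSpace 𝔸]
  [NormedAddCommGroup E] [NormedSpace ℝ E] (L : 𝔸 →L[ℝ] E) (a : 𝔸)

theorem hasDerivAt_map_exp_smul_mul (b : 𝔸) (s : ℝ) :
    HasDerivAt (fun u : ℝ => L (exp (u • a) * b)) (L (exp (s • a) * (a * b))) s := by
  rw [← mul_assoc]
  exact L.hasFDerivAt.comp_hasDerivAt s ((hasDerivAt_exp_smul_const a s).mul_const b)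

theorem continuous_map_exp_smul : Continuous fun s : ℝ => L (exp (s • a)) :=
  continuous_iff_continuousAt.2 fun s => by
    simpa using (hasDerivAt_map_exp_smul_mul L a 1 s).continuousAt

theorem map_exp_eq_zero_of_map_pow_eq_zero (h : ∀ n, L (a ^ n) = 0) : L (exp a) = 0 := by
  rw [exp_eq_tsum ℝ, L.map_tsum (expSeries_summable' a)]
  simp [h]

theorem map_pow_eq_zero_of_eqOn_map_exp_smul (h : EqOn (fun s : ℝ => L (exp (s • a))) 0 (Ici 0))
    (n : ℕ) : L (a ^ n) = 0 := by
  have key : ∀ n : ℕ, EqOn (fun s : ℝ => L (exp (s • a) * a ^ n)) 0 (Ici 0) := by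
    intro n
    induction n with
    | zero => simpa using h
    | succ n ih =>
      refine eqOn_zero_of_hasDerivAt (fun s => ?_) ih
      simpa [pow_succ'] using hasDerivAt_map_exp_smul_mul L a (a ^ n) s
  simpa using key n self_mem_Ici

theorem map_pow_eq_zero_of_integral_map_exp_smul_eq_zero [CompleteSpace E]
    (h : ∀ t, 0 ≤ t → ∫ s in (0 : ℝ)..t, L (exp (s • a)) = 0) (n : ℕ) : L (a ^ n) = 0 :=
  map_pow_eq_zero_of_eqOn_map_exp_smul L a
    (eqOn_zero_of_hasDerivAt
      (fun t => ((continuous_map_exp_smul L a).integral_hasStrictDerivAt 0 t).hasDerivAt) h) n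

end BanachAlgebra

section Matrix

variable {m n : Type*} [Fintype n]

def Matrix.mulMulVecₗ {R : Type*} [CommRing R] (C : Matrix m n R) (x : n → R) :
    Matrix n n R →ₗ[R] (m → R) where
  toFun M := (C * M) *ᵥ x
  map_add' M N := by simp [Matrix.mul_add, Matrix.add_mulVec]
  map_smul' r M := by simp [Matrix.mul_smul, Matrix.smul_mulVec]

variable [DecidableEq n]

theorem Matrix.mulVec_pow_eq_zero_of_lt_card {R : Type*} [CommRing R] [Nontrivial R]
    (A : Matrix n n R) (C : Matrix m n R) (x : n → R)
    (h : ∀ i < Fintype.card n, (C * A ^ i) *ᵥ x = 0) (k : ℕ) : (C * A ^ k) *ᵥ x = 0 := by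
  have hspan : span R ((A ^ ·) '' Iio (Fintype.card n)) ≤ LinearMap.ker (mulMulVecₗ C x) :=
    span_le.2 <| by rintro _ ⟨i, hi, rfl⟩; exact h i hi
  exact hspan (A.pow_mem_span_pow_lt_card k)

theorem Matrix.rank_eq_iff_forall_mulVec_pow_eq_zero {K : Type*} [Field K] {d q : ℕ}
    (A : Matrix (Fin d) (Fin d) K) (C : Matrix (Fin q) (Fin d) K)
    (O : Matrix (Fin d × Fin q) (Fin d) K)
    (hO : ∀ (i : Fin d) (j : Fin q) (l : Fin d), O (i, j) l = (C * A ^ (i : ℕ)) j l) :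
    O.rank = d ↔ ∀ x, (∀ k : ℕ, (C * A ^ k) *ᵥ x = 0) → x = 0 := by
  have hO_ker : ∀ x, O *ᵥ x = 0 ↔ ∀ i : Fin d, (C * A ^ (i : ℕ)) *ᵥ x = 0 := fun x => by
    simp only [funext_iff, Prod.forall, mulVec, dotProduct, hO, Pi.zero_apply]
  have hrank := O.rank_eq_card_iff_ker_mulVecLin_eq_bot
  rw [Fintype.card_fin] at hrank
  rw [hrank, LinearMap.ker_eq_bot']
  refine forall_congr' fun x => imp_congr_left ⟨fun h k => ?_, fun h => (hO_ker x).2 fun i => h i⟩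
  exact A.mulVec_pow_eq_zero_of_lt_card C x
    (fun i hi => (hO_ker x).1 h ⟨i, by simpa using hi⟩) k

-- Any algebra norm would do: `exp` on matrices depends only on the topology.
attribute [local instance] Matrix.linftyOpNormedRing Matrix.linftyOpNormedAlgebra

variable [Fintype m] (A : Matrix n n ℝ) (C : Matrix m n ℝ)

theorem Matrix.mulVec_exp_smul_eq_zero {x : n → ℝ} (h : ∀ k : ℕ, (C * A ^ k) *ᵥ x = 0) (s : ℝ) :
    (C * exp (s • A)) *ᵥ x = 0 :=
  map_exp_eq_zero_of_map_pow_eq_zero (mulMulVecₗ C x).toContinuousLinearMap (s • A) fun k =>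
    show (C * (s • A) ^ k) *ᵥ x = 0 by
      rw [smul_pow, Matrix.mul_smul, Matrix.smul_mulVec, h k, smul_zero]

theorem Matrix.mulVec_pow_eq_zero_of_integral_mulVec_exp_smul_eq_zero {x : n → ℝ}
    (h : ∀ t, 0 ≤ t → ∫ s in (0 : ℝ)..t, (C * exp (s • A)) *ᵥ x = 0) (k : ℕ) :
    (C * A ^ k) *ᵥ x = 0 :=
  map_pow_eq_zero_of_integral_map_exp_smul_eq_zero (mulMulVecₗ C x).toContinuousLinearMap A h k

theorem Matrix.continuous_mulVec_exp_smul (x : n → ℝ) :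
    Continuous fun s : ℝ => (C * exp (s • A)) *ᵥ x :=
  continuous_map_exp_smul (mulMulVecₗ C x).toContinuousLinearMap A

noncomputable def Matrix.integralOutput (t : ℝ) : (n → ℝ) →ₗ[ℝ] (m → ℝ) where
  toFun x := ∫ s in (0 : ℝ)..t, (C * exp (s • A)) *ᵥ x
  map_add' x y := by
    rw [← intervalIntegral.integral_add ((continuous_mulVec_exp_smul A C x).intervalIntegrable _ _)
      ((continuous_mulVec_exp_smul A C y).intervalIntegrable _ _)]
    simp [Matrix.mulVec_add]
  map_smul' r x := by simp [Matrix.mulVec_smul]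

end Matrix

/-- **Lemma 3.6.** For a `d × d` matrix `A` and a `q × d` matrix `C`, the
observability matrix `O(A,C)` (block rows `C, CA, …, CA^{d-1}`) has full rank `d` if and
only if there are finitely many times `t₁, …, t_k ≥ 0` and a linear map
`f : (ℝ^q)^k → ℝ^d` with `f (∫₀^{t₁} C e^{sA} x ds, …, ∫₀^{t_k} C e^{sA} x ds) = x`
for all `x ∈ ℝ^d`. -/
theorem stmt7 (d q : ℕ)
    (A : Matrix (Fin d) (Fin d) ℝ) (C : Matrix (Fin q) (Fin d) ℝ)
    (O : Matrix (Fin d × Fin q) (Fin d) ℝ)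
    (hO : ∀ (i : Fin d) (j : Fin q) (l : Fin d), O (i, j) l = (C * A ^ (i : ℕ)) j l) :
    O.rank = d ↔
      ∃ (k : ℕ) (t : Fin k → ℝ) (f : (Fin k → Fin q → ℝ) →ₗ[ℝ] (Fin d → ℝ)),
        (∀ i, 0 ≤ t i) ∧
        ∀ x : Fin d → ℝ,
          f (fun i => ∫ s in (0:ℝ)..(t i),
              (C * NormedSpace.exp (s • A)).mulVec x) = x := by
  rw [rank_eq_iff_forall_mulVec_pow_eq_zero A C O hO]
  constructor
  · intro hobs
    have hbot : ⨅ t : Ici (0 : ℝ), LinearMap.ker (integralOutput A C t) = ⊥ := by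
      refine eq_bot_iff.2 fun x hx => hobs x <|
        mulVec_pow_eq_zero_of_integral_mulVec_exp_smul_eq_zero A C fun t ht => ?_
      exact (mem_iInf _).1 hx ⟨t, ht⟩
    obtain ⟨k, t, ht⟩ :=
      exists_fin_iInf_eq_iInf fun t : Ici (0 : ℝ) => LinearMap.ker (integralOutput A C t)
    obtain ⟨f, hf⟩ :=
      (LinearMap.pi fun i => integralOutput A C (t i)).exists_leftInverse_of_injective
        (by rw [LinearMap.ker_pi, ht, hbot])
    exact ⟨k, fun i => t i, f, fun i => (t i).2, LinearMap.congr_fun hf⟩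
  · rintro ⟨k, t, f, -, hf⟩ x hx
    rw [← hf x]
    simp only [mulVec_exp_smul_eq_zero A C hx, intervalIntegral.integral_zero]
    exact f.map_zero
end

section
/- Let A be a real d × d matrix and C a real q × d matrix. If the stacked matrix O(A,C) (with block rows C, CA, …, CA^{d−1}) does not have full rank d, then there exists a nonzero vector v ∈ ℝ^d such that ∫₀^t C e^{sA} v ds = 0 for all t ≥ 0. -/
/-!
A kernel vector `v` of `O(A,C)` satisfies `C Aⁱ v = 0` for `i < d`. By Cayley–Hamilton every
power of `A` is a linear combination of `A⁰, …, A^{d-1}`, so `C Aⁿ v = 0` for all `n`: the matrices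
`M` with `C M v = 0` form a subspace containing all powers of `sA`. That subspace is closed, being
finite-dimensional, so it contains the exponential series `e^{sA}`, and the integrand vanishes
identically.
-/

open MeasureTheory Matrix

theorem Matrix.exists_mulVec_eq_zero_of_rank_lt {m n K : Type*} [Fintype n]
    [Field K] (M : Matrix m n K) (h : M.rank < Fintype.card n) :
    ∃ v : n → K, v ≠ 0 ∧ M *ᵥ v = 0 := by
  have hker : LinearMap.ker M.mulVecLin ≠ ⊥ := by
    intro hbot
    have := M.mulVecLin.finrank_range_add_finrank_ker
    rw [hbot, finrank_bot, Module.finrank_fintype_fun_eq_card] at this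
    exact h.ne this
  obtain ⟨v, hv, hv0⟩ := Submodule.exists_mem_ne_zero_of_ne_bot hker
  exact ⟨v, hv0, hv⟩

theorem Matrix.pow_mem_of_forall_lt_card {n R : Type*} [Fintype n] [DecidableEq n] [CommRing R]
    [Nontrivial R] {A : Matrix n n R} {S : Submodule R (Matrix n n R)}
    (h : ∀ i < Fintype.card n, A ^ i ∈ S) (k : ℕ) : A ^ k ∈ S := by
  cases isEmpty_or_nonempty n
  · exact Subsingleton.elim (0 : Matrix n n R) (A ^ k) ▸ S.zero_mem
  have hdeg : (Polynomial.X ^ k %ₘ A.charpoly).natDegree < Fintype.card n := by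
    rw [← A.charpoly_natDegree_eq_dim]
    refine Polynomial.natDegree_modByMonic_lt _ A.charpoly_monic fun h1 => ?_
    have hdim := A.charpoly_natDegree_eq_dim
    rw [h1, Polynomial.natDegree_one] at hdim
    exact Fintype.card_ne_zero hdim.symm
  rw [A.pow_eq_aeval_mod_charpoly, Polynomial.aeval_eq_sum_range' hdeg]
  exact S.sum_mem fun i hi => S.smul_mem _ (h i (Finset.mem_range.mp hi))

theorem NormedSpace.exp_mem_of_forall_pow_mem {𝕂 𝔸 : Type*} [Field 𝕂] [CharZero 𝕂] [Ring 𝔸]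
    [Algebra 𝕂 𝔸] [TopologicalSpace 𝔸] [IsTopologicalRing 𝔸] {S : Submodule 𝕂 𝔸}
    (hS : IsClosed (S : Set 𝔸)) {x : 𝔸} (hx : ∀ n : ℕ, x ^ n ∈ S) : NormedSpace.exp x ∈ S := by
  rw [NormedSpace.exp_eq_tsum 𝕂]
  exact tsum_mem hS fun n => S.smul_mem _ (hx n)

/-- If the observability matrix `O(A,C)` (block rows
`C, CA, …, CA^{d-1}`) does not have full rank `d`, then there is a nonzero `v ∈ ℝ^d`
with `∫₀^t C e^{sA} v ds = 0` for all `t ≥ 0`. -/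
theorem stmt8 (d q : ℕ)
    (A : Matrix (Fin d) (Fin d) ℝ) (C : Matrix (Fin q) (Fin d) ℝ)
    (O : Matrix (Fin d × Fin q) (Fin d) ℝ)
    (hO : ∀ (i : Fin d) (j : Fin q) (l : Fin d), O (i, j) l = (C * A ^ (i : ℕ)) j l)
    (hrank : O.rank ≠ d) :
    ∃ v : Fin d → ℝ, v ≠ 0 ∧ ∀ t : ℝ, 0 ≤ t →
      ∫ s in (0:ℝ)..t, (C * NormedSpace.exp (s • A)).mulVec v = 0 := by
  obtain ⟨v, hv0, hOv⟩ := O.exists_mulVec_eq_zero_of_rank_lt <| by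
    simpa using O.rank_le_card_width.lt_of_ne (by simpa using hrank)
  refine ⟨v, hv0, fun t _ => ?_⟩
  let S : Submodule ℝ (Matrix (Fin d) (Fin d) ℝ) :=
    LinearMap.ker ((C.mulVecLin).comp ((LinearMap.applyₗ v).comp (mulVecBilin ℝ ℝ)))
  have hmem : ∀ M, M ∈ S ↔ (C * M) *ᵥ v = 0 := fun M => by
    simp [S, mulVec_mulVec]
  have hpow : ∀ k, A ^ k ∈ S := pow_mem_of_forall_lt_card fun i hi => by
    rw [hmem]
    ext j
    simpa [mulVec, dotProduct, hO] using congrFun hOv (⟨i, by simpa using hi⟩, j)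
  have hexp : ∀ s : ℝ, NormedSpace.exp (s • A) ∈ S := fun s =>
    NormedSpace.exp_mem_of_forall_pow_mem S.closed_of_finiteDimensional fun k => by
      simpa [smul_pow] using S.smul_mem (s ^ k) (hpow k)
  simp [(hmem _).mp (hexp _)]
end

section
/- Let h : ℝ → ℝ be bi-Lipschitz, i.e., there exist 0 < m < M < ∞ with m|x − y| ≤ |h(x) − h(y)| ≤ M|x − y| for all x, y ∈ ℝ. Then there exist a nonzero constant C ∈ ℝ and a Lipschitz function h₀ : ℝ → ℝ with Lipschitz constant of x ↦ C⁻¹h₀(x) strictly less than 1 such that h(x) = Cx + h₀(x) for all x; moreover one may take |C| = (M + m)/2 and the Lipschitz constant of C⁻¹h₀ at most (M − m)/(M + m). -/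
private lemma aux10 (a d m M : ℝ) (h1 : m * d ≤ a) (h2 : a ≤ M * d) :
    |a - (M + m) / 2 * d| ≤ (M - m) / 2 * d := by
  rw [abs_le]; constructor <;> linarith

/-- **Lemma 3.10, second half.** Any bi-Lipschitz `h : ℝ → ℝ` with
constants `0 < m < M` can be written as `h(x) = Cx + h₀(x)` where `|C| = (M + m)/2`
and the Lipschitz constant of `x ↦ C⁻¹ h₀(x)` is at most `(M - m)/(M + m) < 1`. -/
theorem stmt10 (h : ℝ → ℝ) (m M : ℝ) (hm : 0 < m) (hmM : m < M)
    (hbilip : ∀ x y : ℝ, m * |x - y| ≤ |h x - h y| ∧ |h x - h y| ≤ M * |x - y|) :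
    ∃ C : ℝ, C ≠ 0 ∧ |C| = (M + m) / 2 ∧
      ∃ h₀ : ℝ → ℝ, (∀ x, h x = C * x + h₀ x) ∧
        (M - m) / (M + m) < 1 ∧
        ∀ x y : ℝ, |C⁻¹ * h₀ x - C⁻¹ * h₀ y| ≤ ((M - m) / (M + m)) * |x - y| := by
  have hMm : (0:ℝ) < M + m := by linarith
  have hinj : Function.Injective h := by
    intro x y hxy
    by_contra hne
    have h1 := (hbilip x y).1
    rw [hxy, sub_self, abs_zero] at h1
    have : |x - y| ≤ 0 := by nlinarith [abs_nonneg (x - y)]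
    exact hne (by rwa [abs_nonpos_iff, sub_eq_zero] at this)
  have hcont : Continuous h := by
    have : LipschitzWith (Real.toNNReal M) h := by
      intro x y
      have h2 := (hbilip x y).2
      simp only [edist_dist, Real.dist_eq]
      rw [← ENNReal.ofReal_coe_nnreal]
      rw [← ENNReal.ofReal_mul (by positivity)]
      apply ENNReal.ofReal_le_ofReal
      rw [Real.coe_toNNReal _ (le_of_lt (lt_trans hm hmM))]
      exact h2
    exact this.continuous
  -- key bound given sign ε
  have key : ∀ ε : ℝ, (ε = 1 ∨ ε = -1) →
      (∀ x y : ℝ, x < y → h y - h x = ε * |h y - h x|) →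
      ∃ C : ℝ, C ≠ 0 ∧ |C| = (M + m) / 2 ∧
      ∃ h₀ : ℝ → ℝ, (∀ x, h x = C * x + h₀ x) ∧
        (M - m) / (M + m) < 1 ∧
        ∀ x y : ℝ, |C⁻¹ * h₀ x - C⁻¹ * h₀ y| ≤ ((M - m) / (M + m)) * |x - y| := by
    intro ε hε hsign
    have hεabs : |ε| = 1 := by rcases hε with rfl | rfl <;> norm_num
    have hεne : ε ≠ 0 := by rcases hε with rfl | rfl <;> norm_num
    refine ⟨ε * ((M + m) / 2), by positivity, ?_, fun x => h x - ε * ((M + m) / 2) * x,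
      fun x => by ring, ?_, ?_⟩
    · rw [abs_mul, hεabs, one_mul, abs_of_pos (by positivity)]
    · rw [div_lt_one hMm]; linarith
    · -- main estimate
      have main : ∀ x y : ℝ, x < y →
          |(h x - ε * ((M + m) / 2) * x) - (h y - ε * ((M + m) / 2) * y)|
            ≤ (M - m) / 2 * |x - y| := by
        intro x y hxy
        have habs : |x - y| = y - x := by rw [abs_sub_comm]; exact abs_of_pos (by linarith)
        have h1 := (hbilip y x).1
        have h2 := (hbilip y x).2
        rw [abs_sub_comm y x, habs] at h1 h2
        have hs := hsign x y hxy
        have e1 : (h x - ε * ((M + m) / 2) * x) - (h y - ε * ((M + m) / 2) * y)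
            = -(ε * (|h y - h x| - (M + m) / 2 * (y - x))) := by
          rw [mul_sub, ← hs]; ring
        rw [e1, abs_neg, abs_mul, hεabs, one_mul, habs]
        exact aux10 _ _ _ _ h1 h2
      intro x y
      set C := ε * ((M + m) / 2) with hC
      have hCabs : |C| = (M + m) / 2 := by
        rw [hC, abs_mul, hεabs, one_mul, abs_of_pos (by positivity)]
      have hCne : C ≠ 0 := by rw [hC]; positivity
      have step : |(h x - C * x) - (h y - C * y)| ≤ (M - m) / 2 * |x - y| := by
        rcases lt_trichotomy x y with hlt | rfl | hgt
        · exact main x y hlt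
        · simp
        · rw [abs_sub_comm, abs_sub_comm x y]; exact main y x hgt
      have : |C⁻¹ * (h x - C * x) - C⁻¹ * (h y - C * y)|
          = |C|⁻¹ * |(h x - C * x) - (h y - C * y)| := by
        rw [← abs_inv, ← abs_mul]; ring_nf
      rw [this, hCabs]
      calc ((M + m) / 2)⁻¹ * |(h x - C * x) - (h y - C * y)|
          ≤ ((M + m) / 2)⁻¹ * ((M - m) / 2 * |x - y|) := by
            apply mul_le_mul_of_nonneg_left step (by positivity)
        _ = (M - m) / (M + m) * |x - y| := by
            field_simp
  rcases hcont.strictMono_of_inj hinj with hmono | hanti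
  · refine key 1 (Or.inl rfl) fun x y hxy => ?_
    rw [one_mul, abs_of_pos (by linarith [hmono hxy] : (0:ℝ) < h y - h x)]
  · refine key (-1) (Or.inr rfl) fun x y hxy => ?_
    rw [neg_one_mul, abs_of_neg (by linarith [hanti hxy] : h y - h x < 0), neg_neg]
end

section
/- Let b : ℝ^q → ℝ^q be globally Lipschitz, and let η : [0,∞) × ℝ^q → ℝ^q satisfy the flow equation η_t(x) = x + ∫₀^t b(η_s(x)) ds for all t ≥ 0 and x ∈ ℝ^q. Let h(x) = Cx + h₀(x), where C is an invertible real q × q matrix and the Lipschitz constant of x ↦ C⁻¹h₀(x) is strictly less than 1. Then there exist constants ε₀ > 0 and m, M > 0 such that for every 0 < ε < ε₀ and all x, y ∈ ℝ^q: m‖x − y‖ ≤ ‖(1/ε)∫₀^ε h(η_s(x)) ds − (1/ε)∫₀^ε h(η_s(y)) ds‖ ≤ M‖x − y‖. -/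
/-!
For short times the flow is a near-identity: a Gronwall argument gives
`‖η_s x - η_s y - (x - y)‖ ≤ 2 K_b s ‖x - y‖` as long as `K_b s ≤ 1/2`. Writing
`h = C ∘ (id + g₀)` with `g₀ = C⁻¹ h₀` a `K`-contraction, the average of `id + g₀` along orbits
differs from the identity by a map with Lipschitz constant `K + O(ε) < 1`, which yields the lower
bound once `C` is applied; the upper bound is the Lipschitz bound of `h`. The one delicate point
is that the integral equation for `η` does not say that `s ↦ b (η_s x)` is integrable; this is
recovered by looking at the largest time up to which it is.
-/

open MeasureTheory Matrix Set
open scoped NNReal Interval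

variable {E F : Type*} [NormedAddCommGroup E] [NormedSpace ℝ E] [NormedAddCommGroup F]

lemma continuousOn_Icc_of_eq_add_integral {w g : ℝ → E} {w₀ : E} {t : ℝ}
    (hg : IntervalIntegrable g volume 0 t)
    (hw : ∀ s ∈ Icc 0 t, w s = w₀ + ∫ u in (0 : ℝ)..s, g u) :
    ContinuousOn w (Icc 0 t) :=
  ((continuousOn_const.add (intervalIntegral.continuousOn_primitive_interval' hg
    left_mem_uIcc)).mono Icc_subset_uIcc).congr hw

/-- A Gronwall inequality for short times: when `L t ≤ 1/2`, the integral term absorbs at most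
half of the maximum of `‖w‖` on `[0, t]`. -/
lemma norm_le_two_mul_of_eq_add_integral {w g : ℝ → E} {w₀ : E} {c t : ℝ} {L : ℝ≥0}
    (ht : 0 ≤ t) (hc : 0 ≤ c) (hLt : L * t ≤ 1 / 2) (hg : IntervalIntegrable g volume 0 t)
    (hw : ∀ s ∈ Icc 0 t, w s = w₀ + ∫ u in (0 : ℝ)..s, g u)
    (hgw : ∀ s ∈ Icc 0 t, ‖g s‖ ≤ c + L * ‖w s‖) :
    ∀ s ∈ Icc 0 t, ‖w s‖ ≤ 2 * (‖w₀‖ + c * t) := by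
  obtain ⟨s₀, hs₀, hmax⟩ := isCompact_Icc.exists_isMaxOn (nonempty_Icc.2 ht)
    (continuousOn_Icc_of_eq_add_integral hg hw).norm
  have hg_le : ∀ u ∈ Ι 0 s₀, ‖g u‖ ≤ c + L * ‖w s₀‖ := by
    intro u hu
    rw [uIoc_of_le hs₀.1] at hu
    have hu' : u ∈ Icc 0 t := ⟨hu.1.le, hu.2.trans hs₀.2⟩
    exact (hgw u hu').trans (by gcongr; exact hmax hu')
  have key : ‖w s₀‖ ≤ ‖w₀‖ + (c + L * ‖w s₀‖) * s₀ := calc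
    ‖w s₀‖ ≤ ‖w₀‖ + ‖∫ u in (0 : ℝ)..s₀, g u‖ := by rw [hw s₀ hs₀]; exact norm_add_le _ _
    _ ≤ ‖w₀‖ + (c + L * ‖w s₀‖) * |s₀ - 0| := by
        gcongr; exact intervalIntegral.norm_integral_le_of_norm_le_const hg_le
    _ = ‖w₀‖ + (c + L * ‖w s₀‖) * s₀ := by rw [sub_zero, abs_of_nonneg hs₀.1]
  have hLs₀ : L * s₀ * ‖w s₀‖ ≤ ‖w s₀‖ / 2 := by
    have : (L : ℝ) * s₀ ≤ 1 / 2 := (mul_le_mul_of_nonneg_left hs₀.2 L.coe_nonneg).trans hLt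
    nlinarith [norm_nonneg (w s₀)]
  have hcs₀ : c * s₀ ≤ c * t := mul_le_mul_of_nonneg_left hs₀.2 hc
  intro s hs
  have : ‖w s‖ ≤ ‖w s₀‖ := hmax hs
  nlinarith

/-- Since the Bochner integral of a non-integrable function is `0`, this does not by itself make
`s ↦ b (η s x)` integrable; see `IsIntegralFlow.intervalIntegrable`. -/
def IsIntegralFlow (b : E → E) (η : ℝ → E → E) : Prop :=
  ∀ t : ℝ, 0 ≤ t → ∀ x, η t x = x + ∫ s in (0 : ℝ)..t, b (η s x)

namespace IsIntegralFlow

variable {b : E → E} {η : ℝ → E → E} {Kb : ℝ≥0} {s t : ℝ}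

lemma continuousOn_of_intervalIntegrable (hflow : IsIntegralFlow b η) {x : E}
    (hint : IntervalIntegrable (fun s => b (η s x)) volume 0 t) :
    ContinuousOn (fun s => η s x) (Icc 0 t) :=
  continuousOn_Icc_of_eq_add_integral hint fun s hs => hflow s hs.1 x

lemma norm_sub_self_le (hflow : IsIntegralFlow b η) (hb : LipschitzWith Kb b) {x : E}
    (ht : 0 ≤ t) (hKt : Kb * t ≤ 1 / 2)
    (hint : IntervalIntegrable (fun s => b (η s x)) volume 0 t) :
    ∀ s ∈ Icc 0 t, ‖η s x - x‖ ≤ 2 * (‖b x‖ * t) := by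
  have := norm_le_two_mul_of_eq_add_integral (w := fun s => η s x - x) (w₀ := 0) ht
    (norm_nonneg (b x)) hKt hint (fun s hs => by rw [hflow s hs.1 x]; abel)
    (fun s _ => (norm_le_norm_add_norm_sub' _ (b x)).trans (by grw [hb.norm_sub_le]))
  simpa using this

/-- The supremum `τ` of the times up to which `s ↦ b (η s x)` is integrable: below `τ` the
orbit is continuous and, by `norm_sub_self_le`, bounded; beyond `τ` the integral is junk, so
`η s x = x` and the integrand is the constant `b x`. -/
lemma intervalIntegrable (hflow : IsIntegralFlow b η) (hb : LipschitzWith Kb b) (ht : 0 ≤ t)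
    (hKt : Kb * t ≤ 1 / 2) (x : E) : IntervalIntegrable (fun s => b (η s x)) volume 0 t := by
  set S := {s | s ∈ Icc 0 t ∧ IntervalIntegrable (fun s => b (η s x)) volume 0 s}
  have h0S : (0 : ℝ) ∈ S := ⟨⟨le_rfl, ht⟩, IntervalIntegrable.refl⟩
  have hbdd : BddAbove S := ⟨t, fun s hs => hs.1.2⟩
  set τ := sSup S
  have hτ : τ ∈ Icc 0 t := ⟨le_csSup hbdd h0S, csSup_le ⟨0, h0S⟩ fun s hs => hs.1.2⟩
  have below : ∀ u ∈ Ico 0 τ, ∃ s ∈ S, u < s := fun u hu =>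
    exists_lt_of_lt_csSup ⟨0, h0S⟩ hu.2
  have hcont : ContinuousOn (fun s => b (η s x)) (Ico 0 τ) := by
    refine hb.continuous.comp_continuousOn (continuousOn_of_locally_continuousOn fun u hu => ?_)
    obtain ⟨s, hs, hus⟩ := below u hu
    exact ⟨Iio s, isOpen_Iio, hus, (hflow.continuousOn_of_intervalIntegrable hs.2).mono
      fun v hv => ⟨hv.1.1, hv.2.le⟩⟩
  have hbound : ∀ u ∈ Ico 0 τ, ‖b (η u x)‖ ≤ ‖b x‖ + Kb * (2 * (‖b x‖ * t)) := by
    intro u hu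
    obtain ⟨s, hs, hus⟩ := below u hu
    have hKs : Kb * s ≤ 1 / 2 := (mul_le_mul_of_nonneg_left hs.1.2 Kb.coe_nonneg).trans hKt
    have hηu := norm_sub_self_le hflow hb hs.1.1 hKs hs.2 u ⟨hu.1, hus.le⟩
    calc ‖b (η u x)‖ ≤ ‖b x‖ + ‖b (η u x) - b x‖ := norm_le_norm_add_norm_sub' _ _
      _ ≤ ‖b x‖ + Kb * (2 * (‖b x‖ * s)) := by grw [hb.norm_sub_le, hηu]
      _ ≤ ‖b x‖ + Kb * (2 * (‖b x‖ * t)) := by grw [hs.1.2]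
  have head : IntervalIntegrable (fun s => b (η s x)) volume 0 τ := by
    rw [intervalIntegrable_iff_integrableOn_Ico_of_le hτ.1]
    exact IntegrableOn.of_bound measure_Ico_lt_top (hcont.aestronglyMeasurable measurableSet_Ico)
      _ ((ae_restrict_iff' measurableSet_Ico).2 (Filter.Eventually.of_forall hbound))
  have tail : IntervalIntegrable (fun s => b (η s x)) volume τ t := by
    rw [intervalIntegrable_iff_integrableOn_Ioc_of_le hτ.2]
    refine (integrableOn_const (C := b x) measure_Ioc_lt_top.ne enorm_ne_top).congr_fun
      (fun v hv => ?_) measurableSet_Ioc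
    have hv0 : 0 ≤ v := hτ.1.trans hv.1.le
    have hnot : ¬ IntervalIntegrable (fun s => b (η s x)) volume 0 v := fun hi =>
      (not_le.2 hv.1) (le_csSup hbdd ⟨⟨hv0, hv.2⟩, hi⟩)
    show b x = b (η v x)
    rw [hflow v hv0 x, intervalIntegral.integral_undef hnot, add_zero]
  exact head.trans tail

lemma continuousOn (hflow : IsIntegralFlow b η) (hb : LipschitzWith Kb b) (ht : 0 ≤ t)
    (hKt : Kb * t ≤ 1 / 2) (x : E) : ContinuousOn (fun s => η s x) (Icc 0 t) :=
  hflow.continuousOn_of_intervalIntegrable (hflow.intervalIntegrable hb ht hKt x)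

lemma sub_sub_eq_integral (hflow : IsIntegralFlow b η) (hb : LipschitzWith Kb b) (hs : 0 ≤ s)
    (hKs : Kb * s ≤ 1 / 2) (x y : E) :
    η s x - η s y - (x - y) = ∫ u in (0 : ℝ)..s, (b (η u x) - b (η u y)) := by
  rw [intervalIntegral.integral_sub (hflow.intervalIntegrable hb hs hKs x)
    (hflow.intervalIntegrable hb hs hKs y), hflow s hs x, hflow s hs y]
  abel

lemma norm_sub_le_two_mul (hflow : IsIntegralFlow b η) (hb : LipschitzWith Kb b) (ht : 0 ≤ t)
    (hKt : Kb * t ≤ 1 / 2) (x y : E) : ∀ s ∈ Icc 0 t, ‖η s x - η s y‖ ≤ 2 * ‖x - y‖ := by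
  have := norm_le_two_mul_of_eq_add_integral (w := fun s => η s x - η s y) (w₀ := x - y)
    (c := 0) ht le_rfl hKt
    ((hflow.intervalIntegrable hb ht hKt x).sub (hflow.intervalIntegrable hb ht hKt y))
    (fun s hs => by
      rw [← hflow.sub_sub_eq_integral hb hs.1
        ((mul_le_mul_of_nonneg_left hs.2 Kb.coe_nonneg).trans hKt)]
      abel)
    (fun s _ => by simpa using hb.norm_sub_le (η s x) (η s y))
  simpa using this

lemma norm_sub_sub_le (hflow : IsIntegralFlow b η) (hb : LipschitzWith Kb b) (ht : 0 ≤ t)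
    (hKt : Kb * t ≤ 1 / 2) (x y : E) :
    ∀ s ∈ Icc 0 t, ‖η s x - η s y - (x - y)‖ ≤ 2 * Kb * t * ‖x - y‖ := by
  intro s hs
  have hKs : Kb * s ≤ 1 / 2 := (mul_le_mul_of_nonneg_left hs.2 Kb.coe_nonneg).trans hKt
  have hle : ∀ u ∈ Ι 0 s, ‖b (η u x) - b (η u y)‖ ≤ Kb * (2 * ‖x - y‖) := by
    intro u hu
    rw [uIoc_of_le hs.1] at hu
    grw [hb.norm_sub_le, hflow.norm_sub_le_two_mul hb ht hKt x y u ⟨hu.1.le, hu.2.trans hs.2⟩]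
  calc ‖η s x - η s y - (x - y)‖ ≤ Kb * (2 * ‖x - y‖) * |s - 0| := by
        rw [hflow.sub_sub_eq_integral hb hs.1 hKs]
        exact intervalIntegral.norm_integral_le_of_norm_le_const hle
    _ ≤ Kb * (2 * ‖x - y‖) * t := by rw [sub_zero, abs_of_nonneg hs.1]; gcongr; exact hs.2
    _ = 2 * Kb * t * ‖x - y‖ := by ring

end IsIntegralFlow

lemma norm_inv_smul_integral_sub_le [NormedSpace ℝ F] [CompleteSpace F] {Φ : ℝ → F} {v : F}
    {ε δ : ℝ} (hε : 0 < ε) (hΦ : IntervalIntegrable Φ volume 0 ε)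
    (hδ : ∀ s ∈ Ioc 0 ε, ‖Φ s - v‖ ≤ δ) :
    ‖ε⁻¹ • (∫ s in (0 : ℝ)..ε, Φ s) - v‖ ≤ δ := by
  have hsub : ε⁻¹ • (∫ s in (0 : ℝ)..ε, Φ s) - v = ε⁻¹ • ∫ s in (0 : ℝ)..ε, (Φ s - v) := by
    rw [intervalIntegral.integral_sub hΦ intervalIntegrable_const, intervalIntegral.integral_const,
      sub_zero, smul_sub, inv_smul_smul₀ hε.ne']
  have hint : ‖∫ s in (0 : ℝ)..ε, (Φ s - v)‖ ≤ δ * |ε - 0| :=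
    intervalIntegral.norm_integral_le_of_norm_le_const (by rwa [uIoc_of_le hε.le])
  rw [hsub, norm_smul, norm_inv, Real.norm_of_nonneg hε.le, inv_mul_le_iff₀ hε]
  rwa [sub_zero, abs_of_pos hε, mul_comm] at hint

noncomputable def flowAverage [NormedSpace ℝ F] (h : E → F) (η : ℝ → E → E) (ε : ℝ) (x : E) :
    F :=
  ε⁻¹ • ∫ s in (0 : ℝ)..ε, h (η s x)

namespace IsIntegralFlow

variable {b : E → E} {η : ℝ → E → E} {Kb : ℝ≥0} {ε : ℝ} {h : E → F}

lemma intervalIntegrable_comp (hflow : IsIntegralFlow b η) (hb : LipschitzWith Kb b)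
    (hε : 0 ≤ ε) (hKε : Kb * ε ≤ 1 / 2) (hh : Continuous h) (x : E) :
    IntervalIntegrable (fun s => h (η s x)) volume 0 ε :=
  ContinuousOn.intervalIntegrable_of_Icc hε (hh.comp_continuousOn (hflow.continuousOn hb hε hKε x))

variable [NormedSpace ℝ F]

lemma flowAverage_sub (hflow : IsIntegralFlow b η) (hb : LipschitzWith Kb b) (hε : 0 ≤ ε)
    (hKε : Kb * ε ≤ 1 / 2) (hh : Continuous h) (x y : E) :
    flowAverage h η ε x - flowAverage h η ε y =
      ε⁻¹ • ∫ s in (0 : ℝ)..ε, (h (η s x) - h (η s y)) := by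
  rw [flowAverage, flowAverage, ← smul_sub, intervalIntegral.integral_sub
    (hflow.intervalIntegrable_comp hb hε hKε hh x) (hflow.intervalIntegrable_comp hb hε hKε hh y)]

variable [CompleteSpace F]

lemma norm_flowAverage_sub_le (hflow : IsIntegralFlow b η) (hb : LipschitzWith Kb b)
    (hε : 0 < ε) (hKε : Kb * ε ≤ 1 / 2) {Kh : ℝ≥0} (hh : LipschitzWith Kh h) (x y : E) :
    ‖flowAverage h η ε x - flowAverage h η ε y‖ ≤ 2 * Kh * ‖x - y‖ := by
  rw [hflow.flowAverage_sub hb hε.le hKε hh.continuous, ← sub_zero (ε⁻¹ • _)]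
  refine norm_inv_smul_integral_sub_le hε ((hflow.intervalIntegrable_comp hb hε.le hKε
    hh.continuous x).sub (hflow.intervalIntegrable_comp hb hε.le hKε hh.continuous y))
    fun s hs => ?_
  grw [sub_zero, hh.norm_sub_le,
    hflow.norm_sub_le_two_mul hb hε.le hKε x y s (Ioc_subset_Icc_self hs)]
  exact le_of_eq (by ring)

/-- For `h = T ∘ (id + g₀)` the average is, up to `T`, a perturbation of `x ↦ x` of size
`K + O(ε)`, so it inherits the lower bound of `T`. -/
lemma mul_norm_sub_le_norm_flowAverage_sub [CompleteSpace E] (hflow : IsIntegralFlow b η)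
    (hb : LipschitzWith Kb b) (hε : 0 < ε) (hKε : Kb * ε ≤ 1 / 2) {T : E →L[ℝ] F} {KT : ℝ≥0}
    (hT : AntilipschitzWith KT T) {g₀ : E → E} {K : ℝ≥0} (hg₀ : LipschitzWith K g₀) (x y : E) :
    (1 - K - 2 * (1 + K) * Kb * ε) * ‖x - y‖ ≤
      KT * ‖flowAverage (fun a => T (a + g₀ a)) η ε x -
        flowAverage (fun a => T (a + g₀ a)) η ε y‖ := by
  set G : E → E := fun a => a + g₀ a
  have hG : Continuous G := continuous_id.add hg₀.continuous
  have hcomm : ∀ z, flowAverage (fun a => T (G a)) η ε z = T (flowAverage G η ε z) := fun z => by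
    rw [flowAverage, flowAverage, map_smul,
      T.intervalIntegral_comp_comm (hflow.intervalIntegrable_comp hb hε.le hKε hG z)]
  have hdev : ‖flowAverage G η ε x - flowAverage G η ε y - (x - y)‖ ≤
      (K + 2 * (1 + K) * Kb * ε) * ‖x - y‖ := by
    rw [hflow.flowAverage_sub hb hε.le hKε hG]
    refine norm_inv_smul_integral_sub_le hε ((hflow.intervalIntegrable_comp hb hε.le hKε hG
      x).sub (hflow.intervalIntegrable_comp hb hε.le hKε hG y)) fun s hs => ?_
    have hdrift := hflow.norm_sub_sub_le hb hε.le hKε x y s (Ioc_subset_Icc_self hs)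
    calc ‖G (η s x) - G (η s y) - (x - y)‖
        = ‖(η s x - η s y - (x - y)) + (g₀ (η s x) - g₀ (η s y))‖ := by
          congr 1; simp only [G]; abel
      _ ≤ ‖η s x - η s y - (x - y)‖ + K * ‖η s x - η s y‖ :=
          norm_add_le_of_le le_rfl (hg₀.norm_sub_le _ _)
      _ ≤ ‖η s x - η s y - (x - y)‖ + K * (‖x - y‖ + ‖η s x - η s y - (x - y)‖) := by
          grw [norm_le_norm_add_norm_sub' (η s x - η s y) (x - y)]
      _ ≤ (K + 2 * (1 + K) * Kb * ε) * ‖x - y‖ := by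
          nlinarith [K.coe_nonneg, norm_nonneg (x - y)]
  calc (1 - K - 2 * (1 + K) * Kb * ε) * ‖x - y‖
      ≤ ‖flowAverage G η ε x - flowAverage G η ε y‖ := by
        linarith [norm_le_norm_add_norm_sub (flowAverage G η ε x - flowAverage G η ε y) (x - y)]
    _ ≤ KT * ‖T (flowAverage G η ε x) - T (flowAverage G η ε y)‖ := by
        simpa only [dist_eq_norm] using hT.le_mul_dist _ _
    _ = KT * ‖flowAverage (fun a => T (G a)) η ε x - flowAverage (fun a => T (G a)) η ε y‖ := by
        rw [hcomm, hcomm]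

theorem exists_bilipschitz_flowAverage [CompleteSpace E] (hflow : IsIntegralFlow b η)
    (hb : LipschitzWith Kb b) {T : E →L[ℝ] F} {KT : ℝ≥0} (hT : AntilipschitzWith KT T)
    {g₀ : E → E} {K : ℝ≥0} (hg₀ : LipschitzWith K g₀) (hK : (K : ℝ) < 1) :
    ∃ ε₀ > (0 : ℝ), ∃ m M : ℝ, 0 < m ∧ 0 < M ∧ ∀ ε : ℝ, 0 < ε → ε < ε₀ → ∀ x y : E,
      m * ‖x - y‖ ≤ ‖flowAverage (fun a => T (a + g₀ a)) η ε x -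
          flowAverage (fun a => T (a + g₀ a)) η ε y‖ ∧
        ‖flowAverage (fun a => T (a + g₀ a)) η ε x -
          flowAverage (fun a => T (a + g₀ a)) η ε y‖ ≤ M * ‖x - y‖ := by
  have hh : LipschitzWith (‖T‖₊ * (1 + K)) (fun a => T (a + g₀ a)) :=
    T.lipschitz.comp (LipschitzWith.id.add hg₀)
  have hK₀ : (0 : ℝ) < 1 - K := sub_pos.2 hK
  refine ⟨(1 - K) / (8 * (Kb + 1)), by positivity, (1 - K) / (2 * (KT + 1)),
    2 * ↑(‖T‖₊ * (1 + K)) + 1, by positivity, by positivity, fun ε hε hεε₀ x y => ?_⟩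
  rw [lt_div_iff₀ (by positivity)] at hεε₀
  have hsmall : 2 * (1 + K) * Kb * ε ≤ (1 - K) / 2 := by
    nlinarith [K.coe_nonneg, Kb.coe_nonneg, mul_nonneg Kb.coe_nonneg hε.le]
  have hKε : Kb * ε ≤ 1 / 2 := by nlinarith [K.coe_nonneg, Kb.coe_nonneg]
  have hlow := hflow.mul_norm_sub_le_norm_flowAverage_sub hb hε hKε hT hg₀ x y
  have hup := hflow.norm_flowAverage_sub_le hb hε hKε hh x y
  constructor
  · rw [div_mul_eq_mul_div, div_le_iff₀ (by positivity)]
    nlinarith [mul_le_mul_of_nonneg_right hsmall (norm_nonneg (x - y)), norm_nonneg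
      (flowAverage (fun a => T (a + g₀ a)) η ε x - flowAverage (fun a => T (a + g₀ a)) η ε y)]
  · exact hup.trans (by gcongr; linarith)

end IsIntegralFlow

/-- **Lemma 5.1.** Let `η` be the flow of a globally Lipschitz vector
field `b`, and `h(x) = Cx + h₀(x)` with `C` invertible and the Lipschitz constant of
`x ↦ C⁻¹ h₀(x)` strictly less than `1`. Then there are `ε₀ > 0` and `m, M > 0` with
`m ‖x - y‖ ≤ ‖(1/ε) ∫₀^ε h(η_s(x)) ds - (1/ε) ∫₀^ε h(η_s(y)) ds‖ ≤ M ‖x - y‖`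
for all `0 < ε < ε₀` and all `x, y`. -/
theorem stmt11 (q : ℕ)
    (b : EuclideanSpace ℝ (Fin q) → EuclideanSpace ℝ (Fin q))
    (Kb : NNReal) (hb : LipschitzWith Kb b)
    (η : ℝ → EuclideanSpace ℝ (Fin q) → EuclideanSpace ℝ (Fin q))
    (hflow : ∀ t : ℝ, 0 ≤ t → ∀ x, η t x = x + ∫ s in (0:ℝ)..t, b (η s x))
    (C : Matrix (Fin q) (Fin q) ℝ) (hC : IsUnit C)
    (h h₀ : EuclideanSpace ℝ (Fin q) → EuclideanSpace ℝ (Fin q))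
    (hdef : ∀ x, h x = toEuclideanCLM (𝕜 := ℝ) C x + h₀ x)
    (K : NNReal) (hK : (K : ℝ) < 1)
    (hLip : LipschitzWith K (fun x => toEuclideanCLM (𝕜 := ℝ) C⁻¹ (h₀ x))) :
    ∃ ε₀ > (0 : ℝ), ∃ m M : ℝ, 0 < m ∧ 0 < M ∧
      ∀ ε : ℝ, 0 < ε → ε < ε₀ → ∀ x y : EuclideanSpace ℝ (Fin q),
        m * ‖x - y‖ ≤
            ‖(ε⁻¹ • ∫ s in (0:ℝ)..ε, h (η s x)) - ε⁻¹ • ∫ s in (0:ℝ)..ε, h (η s y)‖ ∧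
        ‖(ε⁻¹ • ∫ s in (0:ℝ)..ε, h (η s x)) - ε⁻¹ • ∫ s in (0:ℝ)..ε, h (η s y)‖ ≤
            M * ‖x - y‖ := by
  have hdet : IsUnit C.det := (isUnit_iff_isUnit_det C).1 hC
  set T := toEuclideanCLM (𝕜 := ℝ) C
  set T' := toEuclideanCLM (𝕜 := ℝ) C⁻¹
  have hT'T : Function.LeftInverse T' T := fun v => by
    rw [← mul_apply_eq_comp, ← map_mul, nonsing_inv_mul C hdet, map_one,
      one_apply_eq_self]
  have hTT' : Function.RightInverse T' T := fun v => by
    rw [← mul_apply_eq_comp, ← map_mul, mul_nonsing_inv C hdet, map_one,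
      one_apply_eq_self]
  obtain rfl : h = fun x => T (x + T' (h₀ x)) := funext fun x => by rw [hdef, map_add, hTT']
  exact IsIntegralFlow.exists_bilipschitz_flowAverage (g₀ := fun x => T' (h₀ x)) hflow hb
    (T'.lipschitz.to_rightInverse hT'T) hLip hK
end

section
/- Let h : ℝ^q → ℝ^q be a measurable bijection whose inverse h⁻¹ is uniformly continuous, and let {μ_n}, {ν_n} be sequences of Borel probability measures on ℝ^q. If ‖μ_n ∘ h⁻¹ − ν_n ∘ h⁻¹‖_BL → 0 as n → ∞ (where μ ∘ h⁻¹ denotes the pushforward of μ under h), then ‖μ_n − ν_n‖_BL → 0 as n → ∞. -/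
open MeasureTheory Filter

/-- McShane-style Lipschitz approximation of a bounded function with a modulus bound. -/
lemma approx_lemma {X : Type*} [PseudoMetricSpace X] [Nonempty X] (u : X → ℝ)
    (hb : ∀ x, |u x| ≤ 1) {δ ε : ℝ} (hδ : 0 < δ) (hε : 0 < ε)
    (hmod : ∀ x y, dist x y ≤ δ → |u x - u y| ≤ ε) :
    ∃ φ : X → ℝ, (∀ x, |φ x| ≤ 1) ∧ (∀ x y, dist (φ x) (φ y) ≤ (2/δ) * dist x y) ∧
      ∀ x, |u x - φ x| ≤ ε := by
  set c := 2/δ with hcdef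
  have hc : 0 < c := by positivity
  have hcδ : c * δ = 2 := by rw [hcdef]; field_simp
  set φ : X → ℝ := fun x => ⨅ y, (u y + c * dist x y) with hφ
  have hbdd : ∀ x, BddBelow (Set.range fun y => u y + c * dist x y) := by
    intro x; refine ⟨-1, ?_⟩; rintro _ ⟨y, rfl⟩
    show -1 ≤ u y + c * dist x y
    have h1 := (abs_le.mp (hb y)).1
    nlinarith [dist_nonneg (x := x) (y := y), hc.le]
  have hle : ∀ x, φ x ≤ u x := by
    intro x
    have := ciInf_le (hbdd x) x
    simpa using this
  have hge : ∀ x, u x - ε ≤ φ x := by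
    intro x
    apply le_ciInf; intro y
    show u x - ε ≤ u y + c * dist x y
    rcases le_or_gt (dist x y) δ with hxy | hxy
    · have h1 := (abs_le.mp (hmod x y hxy)).2
      nlinarith [mul_nonneg hc.le (dist_nonneg (x := x) (y := y))]
    · have h2 : 2 ≤ c * dist x y := by nlinarith
      have h3 := (abs_le.mp (hb x)).2
      have h4 := (abs_le.mp (hb y)).1
      linarith
  have hlow : ∀ x, -1 ≤ φ x := by
    intro x
    apply le_ciInf; intro y
    show -1 ≤ u y + c * dist x y
    have h1 := (abs_le.mp (hb y)).1
    nlinarith [dist_nonneg (x := x) (y := y), hc.le]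
  have key : ∀ x x', φ x ≤ φ x' + c * dist x x' := by
    intro x x'
    have h1 : ∀ y, φ x - c * dist x x' ≤ u y + c * dist x' y := by
      intro y
      show φ x - c * dist x x' ≤ u y + c * dist x' y
      have h2 : φ x ≤ u y + c * dist x y := ciInf_le (hbdd x) y
      have h3 : dist x y ≤ dist x x' + dist x' y := dist_triangle x x' y
      nlinarith [hc.le]
    have h4 := le_ciInf h1
    have : φ x - c * dist x x' ≤ φ x' := h4
    linarith
  refine ⟨φ, ?_, ?_, ?_⟩
  · intro x
    exact abs_le.mpr ⟨hlow x, le_trans (hle x) (abs_le.mp (hb x)).2⟩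
  · intro x y
    rw [Real.dist_eq, abs_le]
    constructor
    · have := key y x
      rw [dist_comm y x] at this
      linarith
    · have := key x y
      linarith
  · intro x
    exact abs_le.mpr ⟨by linarith [hle x, hε.le], by linarith [hge x]⟩

lemma le_biSup_real {α : Type*} {S : Set α} {F : α → ℝ}
    (hF : ∀ g ∈ S, F g ≤ 2) {f : α} (hf : f ∈ S) : F f ≤ ⨆ g ∈ S, F g := by
  have h1 : ∀ g, (⨆ _ : g ∈ S, F g) ≤ 2 := fun g =>
    Real.iSup_le (fun hg => hF g hg) (by norm_num)
  have h2 : BddAbove (Set.range fun g => ⨆ _ : g ∈ S, F g) :=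
    ⟨2, by rintro _ ⟨g, rfl⟩; exact h1 g⟩
  calc F f = ⨆ _ : f ∈ S, F f := (ciSup_pos (p := f ∈ S) (f := fun _ => F f) hf).symm
    _ ≤ ⨆ g ∈ S, F g := le_ciSup h2 f

lemma biSup_le_real {α : Type*} {S : Set α} {F : α → ℝ} {a : ℝ}
    (ha : 0 ≤ a) (hF : ∀ g ∈ S, F g ≤ a) : (⨆ g ∈ S, F g) ≤ a :=
  Real.iSup_le (fun g => Real.iSup_le (fun hg => hF g hg) ha) ha

/-- Let `h : ℝ^q → ℝ^q` be a measurable bijection with uniformly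
continuous inverse. If the pushforwards satisfy `‖μₙ ∘ h⁻¹ - νₙ ∘ h⁻¹‖_BL → 0`, then
`‖μₙ - νₙ‖_BL → 0`. -/
theorem stmt13 (q : ℕ)
    (h g : EuclideanSpace ℝ (Fin q) → EuclideanSpace ℝ (Fin q))
    (hmeas : Measurable h) (hbij : Function.Bijective h)
    (hinv : ∀ x, g (h x) = x ∧ h (g x) = x) (hgu : UniformContinuous g)
    (μ ν : ℕ → Measure (EuclideanSpace ℝ (Fin q)))
    (hμ : ∀ n, IsProbabilityMeasure (μ n)) (hν : ∀ n, IsProbabilityMeasure (ν n))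
    (hpush : Tendsto (fun n =>
        ⨆ f ∈ {f : EuclideanSpace ℝ (Fin q) → ℝ | (∀ x, |f x| ≤ 1) ∧ LipschitzWith 1 f},
          |∫ x, f x ∂((μ n).map h) - ∫ x, f x ∂((ν n).map h)|)
      atTop (nhds 0)) :
    Tendsto (fun n =>
        ⨆ f ∈ {f : EuclideanSpace ℝ (Fin q) → ℝ | (∀ x, |f x| ≤ 1) ∧ LipschitzWith 1 f},
          |∫ x, f x ∂(μ n) - ∫ x, f x ∂(ν n)|)
      atTop (nhds 0) := by
  set S : Set (EuclideanSpace ℝ (Fin q) → ℝ) := {f : (EuclideanSpace ℝ (Fin q)) → ℝ | (∀ x, |f x| ≤ 1) ∧ LipschitzWith 1 f} with hS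
  -- basic integral bound
  have hint : ∀ (m : Measure (EuclideanSpace ℝ (Fin q))), IsProbabilityMeasure m → ∀ f ∈ S, Integrable f m := by
    intro m hm f hf
    haveI := hm
    exact (integrable_const (1:ℝ)).mono' hf.2.continuous.aestronglyMeasurable
      (Filter.Eventually.of_forall fun x => by simpa using hf.1 x)
  have hbound : ∀ (m₁ m₂ : Measure (EuclideanSpace ℝ (Fin q))), IsProbabilityMeasure m₁ → IsProbabilityMeasure m₂ →
      ∀ f ∈ S, |∫ x, f x ∂m₁ - ∫ x, f x ∂m₂| ≤ 2 := by
    intro m₁ m₂ h₁ h₂ f hf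
    haveI := h₁; haveI := h₂
    have b1 : ‖∫ x, f x ∂m₁‖ ≤ 1 := by
      have := norm_integral_le_of_norm_le_const (μ := m₁) (C := 1) (f := f)
        (Filter.Eventually.of_forall fun x => by simpa using hf.1 x)
      simpa using this
    have b2 : ‖∫ x, f x ∂m₂‖ ≤ 1 := by
      have := norm_integral_le_of_norm_le_const (μ := m₂) (C := 1) (f := f)
        (Filter.Eventually.of_forall fun x => by simpa using hf.1 x)
      simpa using this
    rw [Real.norm_eq_abs, abs_le] at b1 b2
    exact abs_le.mpr ⟨by linarith [b1.1, b2.2], by linarith [b1.2, b2.1]⟩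
  have hzS : (fun _ : (EuclideanSpace ℝ (Fin q)) => (0:ℝ)) ∈ S := by
    refine ⟨fun x => by norm_num, ?_⟩
    exact (LipschitzWith.const 0).weaken (by norm_num)
  haveI hμmap : ∀ n, IsProbabilityMeasure ((μ n).map h) := fun n => by
    haveI := hμ n; exact Measure.isProbabilityMeasure_map (μ := μ n) hmeas.aemeasurable
  haveI hνmap : ∀ n, IsProbabilityMeasure ((ν n).map h) := fun n => by
    haveI := hν n; exact Measure.isProbabilityMeasure_map (μ := ν n) hmeas.aemeasurable
  -- nonnegativity of the sups
  have hBnonneg : ∀ n, 0 ≤ ⨆ f ∈ S,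
      |∫ x, f x ∂((μ n).map h) - ∫ x, f x ∂((ν n).map h)| := by
    intro n
    have := le_biSup_real
      (F := fun f : (EuclideanSpace ℝ (Fin q)) → ℝ => |∫ x, f x ∂((μ n).map h) - ∫ x, f x ∂((ν n).map h)|)
      (fun f hf => hbound _ _ (hμmap n) (hνmap n) f hf) hzS
    simpa using le_trans (abs_nonneg _) this
  have hAnonneg : ∀ n, 0 ≤ ⨆ f ∈ S, |∫ x, f x ∂(μ n) - ∫ x, f x ∂(ν n)| := by
    intro n
    have := le_biSup_real
      (F := fun f : (EuclideanSpace ℝ (Fin q)) → ℝ => |∫ x, f x ∂(μ n) - ∫ x, f x ∂(ν n)|)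
      (fun f hf => hbound _ _ (hμ n) (hν n) f hf) hzS
    simpa using le_trans (abs_nonneg _) this
  rw [Metric.tendsto_atTop] at hpush ⊢
  intro ε hε
  obtain ⟨δ, hδ, hδ'⟩ := Metric.uniformContinuous_iff.mp hgu (ε/4) (by linarith)
  set c : ℝ := 2 / (δ/2) with hcdef
  have hc0 : 0 < c := by positivity
  set C : ℝ := max 1 c with hCdef
  have hC1 : (1:ℝ) ≤ C := le_max_left _ _
  have hC0 : (0:ℝ) < C := lt_of_lt_of_le one_pos hC1
  have hcC : c ≤ C := le_max_right _ _
  -- the key inequality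
  have key : ∀ n, (⨆ f ∈ S, |∫ x, f x ∂(μ n) - ∫ x, f x ∂(ν n)|) ≤
      C * (⨆ f ∈ S, |∫ x, f x ∂((μ n).map h) - ∫ x, f x ∂((ν n).map h)|) + ε/2 := by
    intro n
    haveI := hμ n; haveI := hν n; haveI := hμmap n; haveI := hνmap n
    apply biSup_le_real
    · have := hBnonneg n
      positivity
    intro f hf
    -- construct the approximation
    set u : (EuclideanSpace ℝ (Fin q)) → ℝ := fun x => f (g x) with hu
    have hub : ∀ x, |u x| ≤ 1 := fun x => hf.1 (g x)
    have hmod : ∀ x y, dist x y ≤ δ/2 → |u x - u y| ≤ ε/4 := by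
      intro x y hxy
      have h1 : dist (g x) (g y) < ε/4 := hδ' (lt_of_le_of_lt hxy (by linarith))
      have h2 : dist (f (g x)) (f (g y)) ≤ 1 * dist (g x) (g y) := hf.2.dist_le_mul _ _
      rw [Real.dist_eq] at h2
      simp only [one_mul] at h2
      exact le_trans h2 h1.le
    obtain ⟨φ, hφb, hφlip, hφu⟩ := approx_lemma u hub (by positivity) (by positivity) hmod
    have hφlip' : ∀ x y, dist (φ x) (φ y) ≤ c * dist x y := hφlip
    have hφlipW : LipschitzWith (Real.toNNReal c) φ :=
      LipschitzWith.of_dist_le_mul (fun x y => by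
        rw [Real.coe_toNNReal c hc0.le]; exact hφlip' x y)
    have hφcont : Continuous φ := hφlipW.continuous
    -- ψ is in S
    set ψ : (EuclideanSpace ℝ (Fin q)) → ℝ := fun x => φ x / C with hψ
    have hψS : ψ ∈ S := by
      constructor
      · intro x
        rw [abs_div, abs_of_pos hC0, div_le_one hC0]
        exact le_trans (hφb x) hC1
      · apply LipschitzWith.of_dist_le_mul
        intro x y
        have h1 : dist (ψ x) (ψ y) = dist (φ x) (φ y) / C := by
          show dist (φ x / C) (φ y / C) = _
          rw [Real.dist_eq, Real.dist_eq, ← sub_div, abs_div, abs_of_pos hC0]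
        rw [h1, NNReal.coe_one, one_mul, div_le_iff₀ hC0]
        calc dist (φ x) (φ y) ≤ c * dist x y := hφlip' x y
          _ ≤ dist x y * C := by nlinarith [dist_nonneg (x := x) (y := y)]
    have hφψ : ∀ x, φ x = C * ψ x := by
      intro x; rw [hψ]; field_simp
    -- integrability
    have hintf : Integrable f (μ n) := hint _ (hμ n) f hf
    have hintf' : Integrable f (ν n) := hint _ (hν n) f hf
    have hφh_meas : AEStronglyMeasurable (fun x => φ (h x)) (μ n) :=
      (hφcont.measurable.comp hmeas).aestronglyMeasurable
    have hφh_meas' : AEStronglyMeasurable (fun x => φ (h x)) (ν n) :=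
      (hφcont.measurable.comp hmeas).aestronglyMeasurable
    have hφh_int : Integrable (fun x => φ (h x)) (μ n) :=
      (integrable_const (1:ℝ)).mono' hφh_meas
        (Filter.Eventually.of_forall fun x => by simpa using hφb (h x))
    have hφh_int' : Integrable (fun x => φ (h x)) (ν n) :=
      (integrable_const (1:ℝ)).mono' hφh_meas'
        (Filter.Eventually.of_forall fun x => by simpa using hφb (h x))
    -- pointwise: f x = u (h x)
    have hfu : ∀ x, f x = u (h x) := fun x => by show f x = f (g (h x)); rw [(hinv x).1]
    -- first and last error terms
    have err : ∀ (m : Measure (EuclideanSpace ℝ (Fin q))), IsProbabilityMeasure m → Integrable f m →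
        Integrable (fun x => φ (h x)) m →
        |∫ x, f x ∂m - ∫ x, φ (h x) ∂m| ≤ ε/4 := by
      intro m hm hi1 hi2
      haveI := hm
      rw [← integral_sub hi1 hi2]
      have := norm_integral_le_of_norm_le_const (μ := m) (C := ε/4)
        (f := fun x => f x - φ (h x))
        (Filter.Eventually.of_forall fun x => by
          have hx := hφu (h x)
          rw [← hfu x] at hx
          simpa using hx)
      simpa using this
    have e1 := err (μ n) (hμ n) hintf hφh_int
    have e2 := err (ν n) (hν n) hintf' hφh_int'
    -- middle term via pushforward
    have hmap1 : ∫ x, φ (h x) ∂(μ n) = ∫ y, φ y ∂((μ n).map h) :=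
      (integral_map hmeas.aemeasurable hφcont.aestronglyMeasurable).symm
    have hmap2 : ∫ x, φ (h x) ∂(ν n) = ∫ y, φ y ∂((ν n).map h) :=
      (integral_map hmeas.aemeasurable hφcont.aestronglyMeasurable).symm
    have hCψ1 : ∫ y, φ y ∂((μ n).map h) = C * ∫ y, ψ y ∂((μ n).map h) := by
      rw [← integral_const_mul]
      exact integral_congr_ae (Filter.Eventually.of_forall fun y => hφψ y)
    have hCψ2 : ∫ y, φ y ∂((ν n).map h) = C * ∫ y, ψ y ∂((ν n).map h) := by
      rw [← integral_const_mul]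
      exact integral_congr_ae (Filter.Eventually.of_forall fun y => hφψ y)
    have mid : |∫ x, φ (h x) ∂(μ n) - ∫ x, φ (h x) ∂(ν n)| ≤
        C * (⨆ f ∈ S, |∫ x, f x ∂((μ n).map h) - ∫ x, f x ∂((ν n).map h)|) := by
      rw [hmap1, hmap2, hCψ1, hCψ2, ← mul_sub, abs_mul, abs_of_pos hC0]
      apply mul_le_mul_of_nonneg_left _ hC0.le
      exact le_biSup_real (fun f' hf' => hbound _ _ (hμmap n) (hνmap n) f' hf') hψS
    calc |∫ x, f x ∂(μ n) - ∫ x, f x ∂(ν n)|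
        ≤ |∫ x, f x ∂(μ n) - ∫ x, φ (h x) ∂(μ n)| +
          |∫ x, φ (h x) ∂(μ n) - ∫ x, φ (h x) ∂(ν n)| +
          |∫ x, φ (h x) ∂(ν n) - ∫ x, f x ∂(ν n)| := by
            have := abs_sub_le (∫ x, f x ∂(μ n)) (∫ x, φ (h x) ∂(μ n)) (∫ x, f x ∂(ν n))
            have := abs_sub_le (∫ x, φ (h x) ∂(μ n)) (∫ x, φ (h x) ∂(ν n)) (∫ x, f x ∂(ν n))
            linarith
      _ ≤ ε/4 + C * (⨆ f ∈ S, |∫ x, f x ∂((μ n).map h) - ∫ x, f x ∂((ν n).map h)|) + ε/4 := by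
            have e2' : |∫ x, φ (h x) ∂(ν n) - ∫ x, f x ∂(ν n)| ≤ ε/4 := by
              rw [abs_sub_comm]; exact e2
            linarith [mid]
      _ = C * (⨆ f ∈ S, |∫ x, f x ∂((μ n).map h) - ∫ x, f x ∂((ν n).map h)|) + ε/2 := by ring
  -- conclude
  obtain ⟨N, hN⟩ := hpush (ε/(4*C)) (by positivity)
  refine ⟨N, fun n hn => ?_⟩
  have hBn := hN n hn
  rw [Real.dist_eq, sub_zero, abs_of_nonneg (hBnonneg n)] at hBn
  rw [Real.dist_eq, sub_zero, abs_of_nonneg (hAnonneg n)]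
  have h1 := key n
  have h2 : C * (⨆ f ∈ S, |∫ x, f x ∂((μ n).map h) - ∫ x, f x ∂((ν n).map h)|) <
      C * (ε/(4*C)) := by
    exact mul_lt_mul_of_pos_left hBn hC0
  have h3 : C * (ε/(4*C)) = ε/4 := by field_simp
  calc (⨆ f ∈ S, |∫ x, f x ∂(μ n) - ∫ x, f x ∂(ν n)|) ≤ _ := h1
    _ < ε/4 + ε/2 := by rw [← h3]; linarith
    _ < ε := by linarith
end

section
/- Let (Ω, 𝓕, P) be a probability space with a filtration (𝓕_n)_{n ∈ ℕ}, and let Λ ≥ 0 be an integrable random variable measurable with respect to 𝓕_∞ := σ(⋃_n 𝓕_n). Then E[ |Λ − E[Λ | 𝓕_n]| | 𝓕_n ] → 0 almost surely as n → ∞. -/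
/-!
For `m ≤ n`, the pointwise triangle inequality through `E[Λ | ℱₘ]`, conditioned on `ℱₙ`, gives
`E[|Λ - E[Λ | ℱₙ]| | ℱₙ] ≤ E[|Λ - E[Λ | ℱₘ]| | ℱₙ] + |E[Λ | ℱₘ] - E[Λ | ℱₙ]|`, since the last term
is `ℱₙ`-measurable. By Lévy's upward theorem, as `n → ∞` the right side tends to
`2 |Λ - E[Λ | ℱₘ]|`, which is small for `m` large, again by Lévy's upward theorem.
-/

open MeasureTheory Filter Topology

section TriangleInequality

variable {Ω : Type*} {m m0 : MeasurableSpace Ω} {μ : Measure Ω} {f g h : Ω → ℝ}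

theorem condExp_abs_sub_le_condExp_abs_sub_add (hm : m ≤ m0) [SigmaFinite (μ.trim hm)]
    (hf : Integrable f μ) (hg : Integrable g μ) (hh : Integrable h μ)
    (hg_meas : StronglyMeasurable[m] g) (hh_meas : StronglyMeasurable[m] h) :
    μ[fun ω => |f ω - h ω| | m] ≤ᵐ[μ] μ[fun ω => |f ω - g ω| | m] + fun ω => |g ω - h ω| := by
  have hfg : Integrable (fun ω => |f ω - g ω|) μ := (hf.sub hg).abs
  have hgh : Integrable (fun ω => |g ω - h ω|) μ := (hg.sub hh).abs
  have hgh_meas : StronglyMeasurable[m] fun ω => |g ω - h ω| := (hg_meas.sub hh_meas).norm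
  calc μ[fun ω => |f ω - h ω| | m]
      ≤ᵐ[μ] μ[(fun ω => |f ω - g ω|) + fun ω => |g ω - h ω| | m] :=
        condExp_mono (hf.sub hh).abs (hfg.add hgh)
          (.of_forall fun ω => abs_sub_le (f ω) (g ω) (h ω))
    _ =ᵐ[μ] μ[fun ω => |f ω - g ω| | m] + μ[fun ω => |g ω - h ω| | m] := condExp_add hfg hgh m
    _ = μ[fun ω => |f ω - g ω| | m] + fun ω => |g ω - h ω| := by
        rw [condExp_of_stronglyMeasurable hm hgh_meas hgh]

end TriangleInequality

theorem tendsto_diag_nhds_zero_of_le_add_abs_sub {a : ℕ → ℕ → ℝ} {c : ℕ → ℝ} {x : ℝ}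
    (hc : Tendsto c atTop (𝓝 x)) (ha : ∀ m, Tendsto (a m) atTop (𝓝 |x - c m|))
    (hle : ∀ m n, m ≤ n → a n n ≤ a m n + |c m - c n|) (hnn : ∀ n, 0 ≤ a n n) :
    Tendsto (fun n => a n n) atTop (𝓝 0) := by
  rw [Metric.tendsto_atTop]
  intro ε hε
  have hc_abs : Tendsto (fun m => |x - c m|) atTop (𝓝 0) := by
    simpa using ((tendsto_const_nhds (x := x)).sub hc).abs
  obtain ⟨m, hm⟩ := (hc_abs.eventually_lt_const (half_pos hε)).exists
  have ham : ∀ᶠ n in atTop, a m n < ε / 2 := (ha m).eventually_lt_const hm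
  have hcm : ∀ᶠ n in atTop, |c m - c n| < ε / 2 := by
    refine (tendsto_const_nhds.sub hc).abs.eventually_lt_const ?_
    rwa [abs_sub_comm]
  obtain ⟨N, hN⟩ := (ham.and (hcm.and (eventually_ge_atTop m))).exists_forall_of_atTop
  refine ⟨N, fun n hn => ?_⟩
  obtain ⟨han, hcn, hmn⟩ := hN n hn
  rw [Real.dist_0_eq_abs, abs_of_nonneg (hnn n)]
  linarith [hle m n hmn]

theorem stmt16_general (Ω : Type*) [m0 : MeasurableSpace Ω]
    (P : Measure Ω) [IsProbabilityMeasure P]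
    (ℱ : Filtration ℕ m0) (Λ : Ω → ℝ)
    (hint : Integrable Λ P)
    (hmeas : Measurable[⨆ n, ℱ n] Λ) :
    ∀ᵐ ω ∂P, Tendsto
      (fun n => (P[fun ω' => |Λ ω' - (P[Λ | ℱ n]) ω'| | ℱ n]) ω)
      atTop (nhds 0) := by
  have hlim : ∀ᵐ ω ∂P, Tendsto (fun n => (P[Λ | ℱ n]) ω) atTop (𝓝 (Λ ω)) :=
    hint.tendsto_ae_condExp hmeas.stronglyMeasurable
  have hlim_abs : ∀ᵐ ω ∂P, ∀ m, Tendsto (fun n => (P[fun ω' => |Λ ω' - (P[Λ | ℱ m]) ω'| | ℱ n]) ω)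
      atTop (𝓝 |Λ ω - (P[Λ | ℱ m]) ω|) := ae_all_iff.2 fun m =>
    (hint.sub integrable_condExp).abs.tendsto_ae_condExp <|
      (hmeas.stronglyMeasurable.sub (stronglyMeasurable_condExp.mono (le_iSup _ m))).norm
  have hle : ∀ᵐ ω ∂P, ∀ m n, m ≤ n → (P[fun ω' => |Λ ω' - (P[Λ | ℱ n]) ω'| | ℱ n]) ω ≤
      (P[fun ω' => |Λ ω' - (P[Λ | ℱ m]) ω'| | ℱ n]) ω + |(P[Λ | ℱ m]) ω - (P[Λ | ℱ n]) ω| :=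
    ae_all_iff.2 fun m => ae_all_iff.2 fun n =>
      if hmn : m ≤ n then
        (condExp_abs_sub_le_condExp_abs_sub_add (ℱ.le n) hint integrable_condExp
          integrable_condExp (stronglyMeasurable_condExp.mono (ℱ.mono hmn))
          stronglyMeasurable_condExp).mono fun _ hω _ => hω
      else .of_forall fun _ h => absurd h hmn
  have hnn : ∀ᵐ ω ∂P, ∀ n, 0 ≤ (P[fun ω' => |Λ ω' - (P[Λ | ℱ n]) ω'| | ℱ n]) ω :=
    ae_all_iff.2 fun n => condExp_nonneg (.of_forall fun _ => abs_nonneg _)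
  filter_upwards [hlim, hlim_abs, hle, hnn] with ω hω_lim hω_lim_abs hω_le hω_nn
  exact tendsto_diag_nhds_zero_of_le_add_abs_sub hω_lim hω_lim_abs hω_le hω_nn

/-- Let `(ℱₙ)` be a filtration on a probability space `(Ω, 𝓕, P)` and
let `Λ ≥ 0` be integrable and measurable with respect to `𝓕_∞ = σ(⋃ₙ ℱₙ)`. Then
`E[|Λ - E[Λ | ℱₙ]| | ℱₙ] → 0` almost surely as `n → ∞`. -/
theorem stmt16 (Ω : Type*) [m0 : MeasurableSpace Ω]
    (P : Measure Ω) [IsProbabilityMeasure P]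
    (ℱ : Filtration ℕ m0) (Λ : Ω → ℝ)
    (hpos : 0 ≤ Λ) (hint : Integrable Λ P)
    (hmeas : Measurable[⨆ n, ℱ n] Λ) :
    ∀ᵐ ω ∂P, Tendsto
      (fun n => (P[fun ω' => |Λ ω' - (P[Λ | ℱ n]) ω'| | ℱ n]) ω)
      atTop (nhds 0) :=
  stmt16_general Ω (m0 := m0) P ℱ Λ hint hmeas
end
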